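/- arXiv:1602.02629 — 5 statements merged into one kernel-verified Lean document; each statement's English description precedes it below -/
import Mathlib

section
/- Let G be a graph with maximum vertex degree d and unit edge capacities, let S, T be disjoint vertex subsets, and suppose there is an S–T flow of value κ that causes edge-congestion at most η ≥ 1. Then G contains a collection of at least ⌈κ/(dη)⌉ vertex-disjoint paths, each with one endpoint in S and the other in T. -/
/-!
Every `S`–`T` separator `X` carries the whole flow, and the flow through a single vertex `x`
is at most `d η`: a flow path through `x` is not trivial (as `S` and `T` are disjoint), so it
uses one of the at most `d` edges at `x`, each of congestion at most `η`. Hence every separator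
has at least `κ / (d η)` vertices, and Menger's theorem yields `⌈κ / (d η)⌉` disjoint paths.

Menger's theorem is proved by Göring's induction on the graph. Delete an edge `xy`; if `G - xy`
still has no `A`–`B` separator of fewer than `k` vertices, use induction. Otherwise let `S` be
one. As `S` does not separate `A` from `B` in `G`, we may assume that in `G - xy - S` the vertex
`y` is not reachable from `A` and `x` cannot reach `B`. Then every `A`–`(S + x)` separator and
every `(S + y)`–`B` separator of `G - xy` separates `A` from `B` in `G`, so induction gives `k`
disjoint `A`–`(S + x)` paths and `k` disjoint `B`–`(S + y)` paths in `G - xy`. They meet only at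
their ends in `S`, and joining them there and along `xy` gives `k` disjoint `A`–`B` paths.
-/

attribute [local instance] Classical.propDecidable

noncomputable section

variable {V : Type}

/-- The degree of a vertex `v` in the simple graph `G`. -/
def deg [Fintype V] (G : SimpleGraph V) (v : V) : ℕ :=
  (Finset.univ.filter (fun u => G.Adj v u)).card

/-- The boundary `Γ(C)` of a cluster `C`: the vertices of `C` having a neighbor outside `C`. -/
def bdry (G : SimpleGraph V) (C : Finset V) : Finset V :=
  C.filter (fun v => ∃ u, u ∉ C ∧ G.Adj v u)

/-- The number of edges `|E(A,B)|` with one endpoint in `A` and the other in `B`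
(for disjoint `A`, `B`). -/
def cutCard (G : SimpleGraph V) (A B : Finset V) : ℕ :=
  ((A ×ˢ B).filter (fun ab => G.Adj ab.1 ab.2)).card

/-- A flow in `G[C]` from `A` to `B`, in which every vertex of `A` sends exactly one
unit of flow, every vertex of `B` receives exactly one unit of flow, and the total
flow through any edge is at most `η`. -/
def HasUnitFlowIn (G : SimpleGraph V) (C A B : Finset V) (η : ℝ) : Prop :=
  ∃ (P : Finset (Σ u v : V, G.Walk u v)) (f : (Σ u v : V, G.Walk u v) → ℝ),
    (∀ p ∈ P, 0 ≤ f p) ∧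
    (∀ p ∈ P, p.1 ∈ A ∧ p.2.1 ∈ B) ∧
    (∀ p ∈ P, ∀ x ∈ p.2.2.support, x ∈ C) ∧
    (∀ a ∈ A, ∑ p ∈ P.filter (fun p => p.1 = a), f p = 1) ∧
    (∀ b ∈ B, ∑ p ∈ P.filter (fun p => p.2.1 = b), f p = 1) ∧
    (∀ e : Sym2 V, ∑ p ∈ P.filter (fun p => e ∈ p.2.2.edges), f p ≤ η)

/-- `T` is `α`-well-linked in `G[C]`: every pair of disjoint equal-sized subsets of `T`
can be connected, one-to-one, by a flow of edge-congestion at most `1/α` inside `C`. -/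
def WellLinkedIn (G : SimpleGraph V) (C T : Finset V) (α : ℝ) : Prop :=
  ∀ T' T'' : Finset V, T' ⊆ T → T'' ⊆ T → Disjoint T' T'' → T'.card = T''.card →
    HasUnitFlowIn G C T' T'' (1 / α)

/-- `T` is `(k',α)`-well-linked in `G[C]`. -/
def WellLinkedKIn (G : SimpleGraph V) (C T : Finset V) (k' : ℕ) (α : ℝ) : Prop :=
  ∀ T' T'' : Finset V, T' ⊆ T → T'' ⊆ T → Disjoint T' T'' → T'.card = T''.card →
    T'.card ≤ k' → HasUnitFlowIn G C T' T'' (1 / α)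

/-- `T` is `α`-well-linked in `G`. -/
def WellLinked [Fintype V] (G : SimpleGraph V) (T : Finset V) (α : ℝ) : Prop :=
  WellLinkedIn G Finset.univ T α

/-- There is a family of pairwise vertex-disjoint paths in `G`, one starting at each
vertex of `A`, each ending at a (necessarily distinct) vertex of `B`. -/
def NodeLinkedSets (G : SimpleGraph V) (A B : Finset V) : Prop :=
  ∃ P : Finset (Σ u v : V, G.Walk u v),
    (∀ p ∈ P, p.2.2.IsPath ∧ p.1 ∈ A ∧ p.2.1 ∈ B) ∧
    (∀ a ∈ A, ∃ p ∈ P, p.1 = a) ∧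
    (∀ p ∈ P, ∀ q ∈ P, p ≠ q → ∀ x ∈ p.2.2.support, x ∉ q.2.2.support)

/-- `T` is node-well-linked in `G`. -/
def NodeWellLinked (G : SimpleGraph V) (T : Finset V) : Prop :=
  ∀ T' T'' : Finset V, T' ⊆ T → T'' ⊆ T → Disjoint T' T'' → T'.card = T''.card →
    NodeLinkedSets G T' T''

/-- `(T₁, T₂)` are node-linked in `G`. -/
def NodeLinked (G : SimpleGraph V) (T₁ T₂ : Finset V) : Prop :=
  ∀ T' T'' : Finset V, T' ⊆ T₁ → T'' ⊆ T₂ → T'.card = T''.card → NodeLinkedSets G T' T''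

/-- `(A,B)` is a `ρ`-balanced cut of the cluster `C` with respect to the vertex set `Γ`. -/
def IsBalancedCut (Γ A B C : Finset V) (ρ : ℝ) : Prop :=
  A ∪ B = C ∧ Disjoint A B ∧
    ρ * (Γ.card : ℝ) ≤ ((A ∩ Γ).card : ℝ) ∧ ρ * (Γ.card : ℝ) ≤ ((B ∩ Γ).card : ℝ)

namespace SimpleGraph

open Finset

variable {G H : SimpleGraph V} {A B S X Z : Finset V} {k : ℕ} {u v w x y : V}

def Separates (G : SimpleGraph V) (A B X : Finset V) : Prop :=
  ∀ ⦃a b : V⦄ (p : G.Walk a b), a ∈ A → b ∈ B → ∃ x ∈ X, x ∈ p.support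

def HasDisjointPaths (G : SimpleGraph V) (A B : Finset V) (k : ℕ) : Prop :=
  ∃ Q : Finset (Σ a b : V, G.Walk a b), k ≤ Q.card ∧
    (∀ q ∈ Q, q.2.2.IsPath ∧ q.1 ∈ A ∧ q.2.1 ∈ B) ∧
    (Q : Set (Σ a b : V, G.Walk a b)).Pairwise fun q r => q.2.2.support.Disjoint r.2.2.support

def IsLinkage (G : SimpleGraph V) (A X : Finset V) (P : V → Σ a b : V, G.Walk a b) : Prop :=
  (∀ v ∈ X, (P v).2.2.IsPath ∧ (P v).1 ∈ A ∧ (P v).2.1 = v) ∧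
    (X : Set V).Pairwise fun v u => (P v).2.2.support.Disjoint (P u).2.2.support

def reachAvoiding (G : SimpleGraph V) (A S : Finset V) : Set V :=
  {v | ∃ a ∈ A, ∃ p : G.Walk a v, ∀ z ∈ p.support, z ∉ S}

lemma notMem_of_mem_reachAvoiding (hv : v ∈ G.reachAvoiding A S) : v ∉ S := by
  obtain ⟨a, -, p, hp⟩ := hv
  exact hp v p.end_mem_support

lemma mem_reachAvoiding_of_mem (hv : v ∈ A) (hvS : v ∉ S) : v ∈ G.reachAvoiding A S :=
  ⟨v, hv, .nil, by simpa using hvS⟩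

lemma mem_reachAvoiding_of_adj (hu : u ∈ G.reachAvoiding A S) (huv : G.Adj u v) (hv : v ∉ S) :
    v ∈ G.reachAvoiding A S := by
  obtain ⟨a, ha, p, hp⟩ := hu
  refine ⟨a, ha, p.concat huv, fun z hz => ?_⟩
  rw [Walk.support_concat, List.mem_append, List.mem_singleton] at hz
  rcases hz with hz | rfl
  exacts [hp z hz, hv]

lemma reachAvoiding_anti (h : S ⊆ Z) : G.reachAvoiding A Z ⊆ G.reachAvoiding A S :=
  fun _ ⟨a, ha, p, hp⟩ => ⟨a, ha, p, fun z hz hzS => hp z hz (h hzS)⟩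

lemma reachAvoiding_subset_of_closed {C : Set V} (hA : ∀ a ∈ A, a ∉ S → a ∈ C)
    (hC : ∀ u ∈ C, ∀ v, G.Adj u v → v ∉ S → v ∈ C) : G.reachAvoiding A S ⊆ C := by
  suffices ∀ {u v} (p : G.Walk u v), u ∈ C → (∀ z ∈ p.support, z ∉ S) → v ∈ C by
    rintro v ⟨a, ha, p, hp⟩
    exact this p (hA a ha (hp a p.start_mem_support)) hp
  intro u v p
  induction p with
  | nil => exact fun hu _ => hu
  | cons huv p ih =>
    intro hu hp
    exact ih (hC _ hu _ huv (hp _ (by simp))) fun z hz => hp z (by simp [hz])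

lemma separates_iff_forall_notMem_reachAvoiding :
    G.Separates A B S ↔ ∀ b ∈ B, b ∉ G.reachAvoiding A S := by
  constructor
  · rintro h b hb ⟨a, ha, p, hp⟩
    obtain ⟨z, hz, hzp⟩ := h p ha hb
    exact hp z hzp hz
  · intro h a b p ha hb
    by_contra! hp
    exact h b hb ⟨a, ha, p, fun z hz hzS => hp z hzS hz⟩

lemma separates_self_right : G.Separates A B B := fun _ b p _ hb => ⟨b, hb, p.end_mem_support⟩

lemma Separates.symm (h : G.Separates A B S) : G.Separates B A S := fun _ _ p ha hb => by
  simpa using h p.reverse hb ha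

lemma Separates.notMem_reachAvoiding (h : G.Separates A B S) (hv : v ∈ G.reachAvoiding A S) :
    v ∉ G.reachAvoiding B S := by
  rintro ⟨b, hb, q, hq⟩
  obtain ⟨a, ha, p, hp⟩ := hv
  obtain ⟨z, hzS, hz⟩ := h (p.append q.reverse) ha hb
  rw [Walk.mem_support_append_iff, Walk.support_reverse, List.mem_reverse] at hz
  rcases hz with hz | hz
  exacts [hp z hz hzS, hq z hz hzS]

lemma Walk.IsPath.eq_or_mem_reachAvoiding {p : G.Walk u v} (hp : p.IsPath)
    (hu : u = v ∨ u ∈ G.reachAvoiding A S) (hS : ∀ z ∈ p.support, z ∈ S → z = v) :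
    ∀ z ∈ p.support, z = v ∨ z ∈ G.reachAvoiding A S := by
  induction p with
  | nil => simp
  | @cons u c v huc p ih =>
    rw [Walk.cons_isPath_iff] at hp
    have hu' : u ∈ G.reachAvoiding A S :=
      hu.resolve_left (by rintro rfl; exact hp.2 p.end_mem_support)
    have hc : c = v ∨ c ∈ G.reachAvoiding A S := by
      by_cases hcS : c ∈ S
      · exact .inl (hS c (by simp) hcS)
      · exact .inr (mem_reachAvoiding_of_adj hu' huc hcS)
    intro z hz
    rw [Walk.support_cons, List.mem_cons] at hz
    rcases hz with rfl | hz
    exacts [.inr hu', ih hp.1 hc (fun z hz => hS z (by simp [hz])) z hz]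

lemma hasDisjointPaths_of_family {ι : Type*} {I : Finset ι} (g : ι → Σ a b : V, G.Walk a b)
    (hg : ∀ i ∈ I, (g i).2.2.IsPath ∧ (g i).1 ∈ A ∧ (g i).2.1 ∈ B)
    (hdisj : (I : Set ι).Pairwise fun i j => (g i).2.2.support.Disjoint (g j).2.2.support)
    (hk : k ≤ I.card) : G.HasDisjointPaths A B k := by
  have hinj : Set.InjOn g I := fun i hi j hj hij => by
    by_contra hne
    exact hdisj hi hj hne (g i).2.2.start_mem_support (hij ▸ (g j).2.2.start_mem_support)
  refine ⟨I.image g, hk.trans (card_image_of_injOn hinj).ge, ?_, ?_⟩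
  · simp only [mem_image]
    rintro _ ⟨i, hi, rfl⟩
    exact hg i hi
  · rw [coe_image, hinj.pairwise_image]
    exact hdisj

lemma hasDisjointPaths_of_le_card_inter (hk : k ≤ (A ∩ B).card) : G.HasDisjointPaths A B k :=
  hasDisjointPaths_of_family (fun v => ⟨v, v, .nil⟩) (fun v hv => by simpa using mem_inter.1 hv)
    (fun v _ u _ hne => by simpa [eq_comm] using hne) hk

lemma HasDisjointPaths.mono (hGH : G ≤ H) (h : G.HasDisjointPaths A B k) :
    H.HasDisjointPaths A B k := by
  obtain ⟨Q, hk, hQ, hdisj⟩ := h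
  refine hasDisjointPaths_of_family (fun q => ⟨q.1, q.2.1, q.2.2.mapLe hGH⟩)
    (fun q hq => ?_) (fun q hq r hr hne => ?_) hk
  · simpa [Walk.isPath_mapLe] using hQ q hq
  · simpa [Walk.support_mapLe_eq_support] using hdisj hq hr hne

lemma HasDisjointPaths.exists_isLinkage (h : G.HasDisjointPaths A X k) (hX : X.card ≤ k) :
    ∃ P, G.IsLinkage A X P := by
  obtain ⟨Q, hk, hQ, hdisj⟩ := h
  have hinj : ∀ q r, q ∈ Q → r ∈ Q → q.2.1 = r.2.1 → q = r := fun q r hq hr hqr => by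
    by_contra hne
    exact hdisj hq hr hne q.2.2.end_mem_support (by rw [hqr]; exact r.2.2.end_mem_support)
  have hsurj : ∀ v, ∃ q : Σ a b : V, G.Walk a b, v ∈ X → q ∈ Q ∧ q.2.1 = v := by
    intro v
    by_cases hv : v ∈ X
    · obtain ⟨q, hq, rfl⟩ := surj_on_of_inj_on_of_card_le (fun q _ => q.2.1)
        (fun q hq => (hQ q hq).2.2) hinj (hX.trans hk) v hv
      exact ⟨q, fun _ => ⟨hq, rfl⟩⟩
    · exact ⟨⟨v, v, .nil⟩, fun h => (hv h).elim⟩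
  choose P hP using hsurj
  refine ⟨P, fun v hv => ⟨(hQ _ (hP v hv).1).1, (hQ _ (hP v hv).1).2.1, (hP v hv).2⟩,
    fun v hv u hu hne => hdisj (hP v hv).1 (hP u hu).1 fun h => hne ?_⟩
  rw [← (hP v hv).2, ← (hP u hu).2, h]

lemma IsLinkage.eq_of_mem_support {P : V → Σ a b : V, G.Walk a b} (hP : G.IsLinkage A X P)
    (hv : v ∈ X) (hw : w ∈ X) (hwv : w ∈ (P v).2.2.support) : w = v := by
  by_contra hne
  exact hP.2 hv hw (Ne.symm hne) hwv
    ((congrArg (· ∈ (P w).2.2.support) (hP.1 w hw).2.2).mp (P w).2.2.end_mem_support)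

lemma IsLinkage.eq_or_mem_reachAvoiding {P : V → Σ a b : V, G.Walk a b}
    (hP : G.IsLinkage A X P) (hSX : S ⊆ X) (hv : v ∈ X) (hw : w ∈ (P v).2.2.support) :
    w = v ∨ w ∈ G.reachAvoiding A S := by
  obtain ⟨hp, hA, hend⟩ := hP.1 v hv
  have hX : ∀ z ∈ (P v).2.2.support, z ∈ S → z = (P v).2.1 := fun z hz hzS =>
    (hP.eq_of_mem_support hv (hSX hzS) hz).trans hend.symm
  rw [← hend]
  refine hp.eq_or_mem_reachAvoiding ?_ hX w hw
  by_cases haS : (P v).1 ∈ S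
  · exact .inl (hX _ (P v).2.2.start_mem_support haS)
  · exact .inr (mem_reachAvoiding_of_mem hA haS)

lemma hasDisjointPaths_of_glue (hGH : G ≤ H) (P Q : V → Σ a b : V, G.Walk a b)
    (hP : ∀ v ∈ X, (P v).1 ∈ A ∧ (P v).2.1 = v)
    (hQ : ∀ v ∈ X, (Q v).1 ∈ B ∧ ((Q v).2.1 = v ∨ H.Adj v (Q v).2.1))
    (hPP : (X : Set V).Pairwise fun v u => (P v).2.2.support.Disjoint (P u).2.2.support)
    (hQQ : (X : Set V).Pairwise fun v u => (Q v).2.2.support.Disjoint (Q u).2.2.support)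
    (hPQ : (X : Set V).Pairwise fun v u => (P v).2.2.support.Disjoint (Q u).2.2.support)
    (hk : k ≤ X.card) : H.HasDisjointPaths A B k := by
  have hglue : ∀ v, ∃ g : Σ a b : V, H.Walk a b,
      v ∈ X → (g.2.2.IsPath ∧ g.1 ∈ A ∧ g.2.1 ∈ B) ∧
        ∀ z ∈ g.2.2.support, z ∈ (P v).2.2.support ∨ z ∈ (Q v).2.2.support := by
    intro v
    by_cases hv : v ∈ X
    swap
    · exact ⟨⟨v, v, .nil⟩, fun h => (hv h).elim⟩
    obtain ⟨hA, hPv⟩ := hP v hv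
    obtain ⟨hB, hQv⟩ := hQ v hv
    obtain ⟨r, hr⟩ : ∃ r : H.Walk (P v).2.1 (Q v).2.1,
        ∀ z ∈ r.support, z = (P v).2.1 ∨ z = (Q v).2.1 := by
      rw [hPv]
      rcases hQv with h | h
      exacts [⟨Walk.nil.copy rfl h.symm, by simp⟩, ⟨.cons h .nil, by simp⟩]
    let p := ((P v).2.2.mapLe hGH).append (r.append ((Q v).2.2.mapLe hGH).reverse)
    refine ⟨⟨_, _, p.bypass⟩, fun _ => ⟨⟨p.bypass_isPath, hA, hB⟩, fun z hz => ?_⟩⟩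
    have hz := p.support_bypass_subset_support hz
    simp only [p, Walk.mem_support_append_iff, Walk.support_reverse, List.mem_reverse,
      Walk.support_mapLe_eq_support] at hz
    rcases hz with hz | hz | hz
    · exact .inl hz
    · rcases hr z hz with rfl | rfl
      exacts [.inl (P v).2.2.end_mem_support, .inr (Q v).2.2.end_mem_support]
    · exact .inr hz
  choose g hg using hglue
  refine hasDisjointPaths_of_family g (fun v hv => (hg v hv).1)
    (fun v hv u hu hne z hzv hzu => ?_) hk
  rcases (hg v hv).2 z hzv with hzv | hzv <;> rcases (hg u hu).2 z hzu with hzu | hzu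
  exacts [hPP hv hu hne hzv hzu, hPQ hv hu hne hzv hzu, hPQ hu hv hne.symm hzu hzv,
    hQQ hv hu hne hzv hzu]

lemma Separates.pairwise_disjoint_isLinkage_swap (hSep : G.Separates A B S) (hxy : x ≠ y)
    (hxS : x ∉ S) (hyS : y ∉ S) (hy : y ∉ G.reachAvoiding A S) (hx : x ∉ G.reachAvoiding B S)
    {P Q : V → Σ a b : V, G.Walk a b} (hP : G.IsLinkage A (insert x S) P)
    (hQ : G.IsLinkage B (insert y S) Q) :
    ((insert x S : Finset V) : Set V).Pairwise fun v u =>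
      (P v).2.2.support.Disjoint (Q (Equiv.swap x y u)).2.2.support := by
  have hτS : ∀ v ∈ S, Equiv.swap x y v = v := fun v hv =>
    Equiv.swap_apply_of_ne_of_ne (ne_of_mem_of_not_mem hv hxS) (ne_of_mem_of_not_mem hv hyS)
  intro v hv u hu hvu w hwv hwu
  rw [mem_coe, mem_insert] at hv hu
  have hτu : Equiv.swap x y u ∈ insert y S := by
    rcases hu with rfl | huS
    · simp
    · simp [hτS u huS, huS]
  -- Apart from its end, `P v` runs through vertices reachable from `A` avoiding `S`, and `Q u`
  -- through vertices reachable from `B` avoiding `S`; no vertex is both, as `S` separates.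
  rcases hP.eq_or_mem_reachAvoiding (subset_insert x S) (mem_insert.2 hv) hwv with rfl | hwA <;>
    rcases hQ.eq_or_mem_reachAvoiding (subset_insert y S) hτu hwu with hwu | hwB
  · rcases hu with rfl | huS
    · rw [Equiv.swap_apply_left] at hwu
      subst hwu
      exact hv.elim (fun h => hxy h.symm) hyS
    · exact hvu (hwu.trans (hτS u huS))
  · rcases hv with rfl | hvS
    exacts [hx hwB, notMem_of_mem_reachAvoiding hwB hvS]
  · rcases hu with rfl | huS
    · rw [Equiv.swap_apply_left] at hwu
      exact hy (hwu ▸ hwA)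
    · exact notMem_of_mem_reachAvoiding hwA (hwu.trans (hτS u huS) ▸ huS)
  · exact hSep.notMem_reachAvoiding hwA hwB

section deleteEdge

variable {G' : SimpleGraph V}

lemma separates_of_mem_reachAvoiding_deleteEdges (hG' : G.deleteEdges {s(x, y)} = G')
    (hSep : G'.Separates A B S) (hx : x ∈ G'.reachAvoiding A S)
    (hy : y ∈ G'.reachAvoiding A S) :
    G.Separates A B S := by
  subst hG'
  rw [separates_iff_forall_notMem_reachAvoiding] at hSep ⊢
  refine fun b hb hbG => hSep b hb
    (reachAvoiding_subset_of_closed (fun a ha haS => mem_reachAvoiding_of_mem ha haS) ?_ hbG)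
  intro u hu v huv hv
  by_cases he : s(u, v) = s(x, y)
  · rcases Sym2.eq_iff.1 he with ⟨-, rfl⟩ | ⟨-, rfl⟩ <;> assumption
  · exact mem_reachAvoiding_of_adj hu (by simp [huv, he]) hv

lemma separates_of_separates_insert_deleteEdges (hG' : G.deleteEdges {s(x, y)} = G')
    (hSep : G'.Separates A B S) (hy : y ∉ G'.reachAvoiding A S)
    (hZ : G'.Separates A (insert x S) Z) : G.Separates A B Z := by
  subst hG'
  rw [separates_iff_forall_notMem_reachAvoiding] at hSep hZ ⊢
  have hSZ : S ⊆ Z ∪ insert y (insert x S) := fun v hv => by simp [hv]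
  -- A walk from `A` avoiding `Z` in `G` meets neither `insert x S` (as `Z` separates it from `A`
  -- in `G'`) nor `y` (unreachable from `A`); so it never uses `xy` and stays in `G'` off `S`.
  refine fun b hb hbG => hSep b hb (reachAvoiding_anti hSZ
    (reachAvoiding_subset_of_closed (fun a ha haZ => mem_reachAvoiding_of_mem ha ?_) ?_ hbG))
  · have haX : a ∉ insert x S := fun h => hZ a h (mem_reachAvoiding_of_mem ha haZ)
    have hay : a ≠ y := by
      rintro rfl
      exact hy (mem_reachAvoiding_of_mem ha fun h => haX (mem_insert_of_mem h))
    simp_all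
  · intro u hu v huv hvZ
    have hu' := notMem_of_mem_reachAvoiding hu
    have huv' : (G.deleteEdges {s(x, y)}).Adj u v := by
      simp only [mem_union, mem_insert, not_or] at hu'
      simp [huv, hu'.2.1, hu'.2.2.1]
    have hvX : v ∉ insert x S := fun h => hZ v h
      (mem_reachAvoiding_of_adj (reachAvoiding_anti subset_union_left hu) huv' hvZ)
    have hvy : v ≠ y := by
      rintro rfl
      exact hy (mem_reachAvoiding_of_adj (reachAvoiding_anti hSZ hu) huv'
        fun h => hvX (mem_insert_of_mem h))
    exact mem_reachAvoiding_of_adj hu huv' (by simp_all)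

lemma exists_isLinkage_insert_of_separates_deleteEdges (hG' : G.deleteEdges {s(x, y)} = G')
    (hk : ∀ Z, G.Separates A B Z → k ≤ Z.card)
    (ih : ∀ A B, (∀ Z, G'.Separates A B Z → k ≤ Z.card) → G'.HasDisjointPaths A B k)
    (hSep : G'.Separates A B S) (hS : S.card < k) (hy : y ∉ G'.reachAvoiding A S) :
    x ∉ S ∧ (insert x S).card = k ∧ ∃ P, G'.IsLinkage A (insert x S) P := by
  have hAX : ∀ Z, G'.Separates A (insert x S) Z → k ≤ Z.card := fun Z hZ =>
    hk Z (separates_of_separates_insert_deleteEdges hG' hSep hy hZ)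
  have hXk : (insert x S).card = k :=
    ((card_insert_le _ _).trans hS).antisymm (hAX _ separates_self_right)
  refine ⟨fun hxS => ?_, hXk, (ih _ _ hAX).exists_isLinkage hXk.le⟩
  rw [insert_eq_of_mem hxS] at hXk
  omega

lemma hasDisjointPaths_of_separates_deleteEdges (hxy : G.Adj x y)
    (hG' : G.deleteEdges {s(x, y)} = G') (hk : ∀ Z, G.Separates A B Z → k ≤ Z.card)
    (ih : ∀ A B, (∀ Z, G'.Separates A B Z → k ≤ Z.card) → G'.HasDisjointPaths A B k)
    (hSep : G'.Separates A B S) (hS : S.card < k)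
    (hy : y ∉ G'.reachAvoiding A S) (hx : x ∉ G'.reachAvoiding B S) :
    G.HasDisjointPaths A B k := by
  obtain ⟨hxS, hXk, P, hP⟩ :=
    exists_isLinkage_insert_of_separates_deleteEdges hG' hk ih hSep hS hy
  obtain ⟨hyS, -, Q, hQ⟩ := exists_isLinkage_insert_of_separates_deleteEdges
    (by rw [Sym2.eq_swap, hG']) (fun Z hZ => hk Z hZ.symm) ih hSep.symm hS hx
  have hτ : ∀ v ∈ insert x S, Equiv.swap x y v ∈ insert y S ∧
      (Equiv.swap x y v = v ∨ G.Adj v (Equiv.swap x y v)) := by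
    intro v hv
    rcases mem_insert.1 hv with rfl | hvS
    · simp [hxy]
    · simp [Equiv.swap_apply_of_ne_of_ne (ne_of_mem_of_not_mem hvS hxS)
        (ne_of_mem_of_not_mem hvS hyS), hvS]
  refine hasDisjointPaths_of_glue (hG' ▸ G.deleteEdges_le _) P (fun v => Q (Equiv.swap x y v))
    (fun v hv => (hP.1 v hv).2) (fun v hv => ⟨(hQ.1 _ (hτ v hv).1).2.1, ?_⟩) hP.2
    (fun v hv u hu hvu => hQ.2 (hτ v hv).1 (hτ u hu).1 ((Equiv.swap x y).injective.ne hvu))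
    (hSep.pairwise_disjoint_isLinkage_swap hxy.ne hxS hyS hy hx hP hQ) hXk.ge
  rw [(hQ.1 _ (hτ v hv).1).2.2]
  exact (hτ v hv).2

end deleteEdge

theorem hasDisjointPaths_of_forall_separates [Finite V] (G : SimpleGraph V) (A B : Finset V)
    (k : ℕ) (h : ∀ X, G.Separates A B X → k ≤ X.card) : G.HasDisjointPaths A B k := by
  induction G using WellFoundedLT.induction generalizing A B with | _ G ih => ?_
  by_cases hE : ∃ x y, G.Adj x y
  swap
  · push Not at hE
    refine hasDisjointPaths_of_le_card_inter (h _ fun a b p ha hb => ?_)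
    cases p with
    | nil => exact ⟨a, mem_inter.2 ⟨ha, hb⟩, Walk.start_mem_support _⟩
    | cons hadj _ => exact (hE _ _ hadj).elim
  obtain ⟨x, y, hxy⟩ := hE
  have hlt : G.deleteEdges {s(x, y)} < G := (G.deleteEdges_le _).lt_of_ne fun hGG => by
    simpa using (congrArg (·.Adj x y) hGG).mpr hxy
  set G' := G.deleteEdges {s(x, y)} with hG'
  have ih' := ih G' hlt
  by_cases h' : ∀ Z, G'.Separates A B Z → k ≤ Z.card
  · exact (ih' A B h').mono (G.deleteEdges_le _)
  push Not at h'
  obtain ⟨S, hSep, hS⟩ := h'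
  have hnot : ¬ G.Separates A B S := fun hG => (h S hG).not_gt hS
  have hA : ¬ (x ∈ G'.reachAvoiding A S ∧ y ∈ G'.reachAvoiding A S) := fun ⟨hx, hy⟩ =>
    hnot (separates_of_mem_reachAvoiding_deleteEdges hG'.symm hSep hx hy)
  have hB : ¬ (x ∈ G'.reachAvoiding B S ∧ y ∈ G'.reachAvoiding B S) := fun ⟨hx, hy⟩ =>
    hnot (separates_of_mem_reachAvoiding_deleteEdges hG'.symm hSep.symm hx hy).symm
  have hABx := hSep.notMem_reachAvoiding (v := x)
  have hABy := hSep.notMem_reachAvoiding (v := y)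
  by_cases horient : y ∉ G'.reachAvoiding A S ∧ x ∉ G'.reachAvoiding B S
  · exact hasDisjointPaths_of_separates_deleteEdges hxy hG'.symm h ih' hSep hS horient.1 horient.2
  · exact hasDisjointPaths_of_separates_deleteEdges hxy.symm (by rw [Sym2.eq_swap]) h ih' hSep hS
      (by tauto) (by tauto)

end SimpleGraph

theorem Finset.sum_le_sum_sum_filter_of_forall_exists {ι κ M : Type*} [AddCommMonoid M]
    [PartialOrder M] [IsOrderedAddMonoid M] {s : Finset ι} {t : Finset κ} {f : ι → M}
    {p : κ → ι → Prop} [∀ j, DecidablePred (p j)] (hf : ∀ i ∈ s, 0 ≤ f i)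
    (h : ∀ i ∈ s, ∃ j ∈ t, p j i) :
    ∑ i ∈ s, f i ≤ ∑ j ∈ t, ∑ i ∈ s with p j i, f i := by
  calc ∑ i ∈ s, f i ≤ ∑ i ∈ s, ∑ j ∈ t with p j i, f i := sum_le_sum fun i hi => by
        obtain ⟨j, hj, hpj⟩ := h i hi
        exact single_le_sum (f := fun _ => f i) (fun _ _ => hf i hi) (mem_filter.2 ⟨hj, hpj⟩)
    _ = ∑ j ∈ t, ∑ i ∈ s with p j i, f i := sum_comm' fun i j => by
        simp only [mem_filter]
        tauto

namespace SimpleGraph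

open Finset

variable [Fintype V] {G : SimpleGraph V} {d : ℕ} {η : ℝ} {S T X : Finset V}
  {P : Finset (Σ a b : V, G.Walk a b)} {f : (Σ a b : V, G.Walk a b) → ℝ}

lemma sum_filter_mem_support_le (hd : ∀ v, deg G v ≤ d) (hη : 0 ≤ η)
    (hf0 : ∀ p ∈ P, 0 ≤ f p) (hnil : ∀ p ∈ P, ¬ p.2.2.Nil)
    (hcong : ∀ e : Sym2 V, ∑ p ∈ P.filter (fun p => e ∈ p.2.2.edges), f p ≤ η) (x : V) :
    ∑ p ∈ P with x ∈ p.2.2.support, f p ≤ d * η := by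
  have hcover : ∀ p ∈ P.filter (x ∈ ·.2.2.support),
      ∃ u ∈ univ.filter (G.Adj x), s(x, u) ∈ p.2.2.edges := by
    intro p hp
    obtain ⟨hpP, hxp⟩ := mem_filter.1 hp
    obtain ⟨e, he, hxe⟩ := (Walk.mem_support_iff_exists_mem_edges_of_not_nil (hnil p hpP)).1 hxp
    obtain ⟨u, rfl⟩ := Sym2.mem_iff_exists.1 hxe
    exact ⟨u, mem_filter.2 ⟨mem_univ u, p.2.2.adj_of_mem_edges he⟩, he⟩
  calc ∑ p ∈ P with x ∈ p.2.2.support, f p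
      ≤ ∑ u ∈ univ.filter (G.Adj x),
          ∑ p ∈ (P.filter (x ∈ ·.2.2.support)).filter (s(x, u) ∈ ·.2.2.edges), f p :=
        sum_le_sum_sum_filter_of_forall_exists (fun p hp => hf0 p (mem_filter.1 hp).1) hcover
    _ ≤ ∑ u ∈ univ.filter (G.Adj x), η := sum_le_sum fun u _ =>
        (sum_le_sum_of_subset_of_nonneg (filter_subset_filter _ (filter_subset _ _))
          fun p hp _ => hf0 p (mem_filter.1 hp).1).trans (hcong _)
    _ = deg G x * η := by rw [sum_const, nsmul_eq_mul, deg]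
    _ ≤ d * η := by gcongr; exact hd x

lemma sum_le_card_mul_of_separates (hd : ∀ v, deg G v ≤ d) (hST : Disjoint S T) (hη : 0 ≤ η)
    (hf0 : ∀ p ∈ P, 0 ≤ f p) (hends : ∀ p ∈ P, p.1 ∈ S ∧ p.2.1 ∈ T)
    (hcong : ∀ e : Sym2 V, ∑ p ∈ P.filter (fun p => e ∈ p.2.2.edges), f p ≤ η)
    (hX : G.Separates S T X) : ∑ p ∈ P, f p ≤ X.card * (d * η) := by
  have hnil : ∀ p ∈ P, ¬ p.2.2.Nil := fun p hp => Walk.not_nil_of_ne fun h =>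
    Finset.disjoint_left.1 hST (hends p hp).1 (by rw [h]; exact (hends p hp).2)
  calc ∑ p ∈ P, f p ≤ ∑ x ∈ X, ∑ p ∈ P with x ∈ p.2.2.support, f p :=
        sum_le_sum_sum_filter_of_forall_exists hf0 fun p hp =>
          hX p.2.2 (hends p hp).1 (hends p hp).2
    _ ≤ ∑ x ∈ X, (d * η : ℝ) := sum_le_sum fun x _ =>
        sum_filter_mem_support_le hd hη hf0 hnil hcong x
    _ = X.card * (d * η) := by rw [sum_const, nsmul_eq_mul]

end SimpleGraph

/-- If a graph of maximum degree `d` carries an `S`–`T` flow of value `κ`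
with edge-congestion at most `η ≥ 1`, then it contains at least `⌈κ/(dη)⌉` vertex-disjoint
paths from `S` to `T`. -/
theorem stmt1 [Fintype V] (G : SimpleGraph V) (d : ℕ) (hd : ∀ v, deg G v ≤ d)
    (S T : Finset V) (hdisj : Disjoint S T) (κ η : ℝ) (hη : 1 ≤ η)
    (P : Finset (Σ u v : V, G.Walk u v)) (f : (Σ u v : V, G.Walk u v) → ℝ)
    (hf0 : ∀ p ∈ P, 0 ≤ f p)
    (hends : ∀ p ∈ P, p.1 ∈ S ∧ p.2.1 ∈ T)
    (hval : ∑ p ∈ P, f p = κ)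
    (hcong : ∀ e : Sym2 V, ∑ p ∈ P.filter (fun p => e ∈ p.2.2.edges), f p ≤ η) :
    ∃ Q : Finset (Σ u v : V, G.Walk u v),
      Nat.ceil (κ / (d * η)) ≤ Q.card ∧
      (∀ q ∈ Q, q.2.2.IsPath ∧ q.1 ∈ S ∧ q.2.1 ∈ T) ∧
      (∀ q ∈ Q, ∀ r ∈ Q, q ≠ r → ∀ x ∈ q.2.2.support, x ∉ r.2.2.support) := by
  have hη0 : 0 ≤ η := zero_le_one.trans hη
  have hsep : ∀ X, G.Separates S T X → Nat.ceil (κ / (d * η)) ≤ X.card := fun X hX =>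
    Nat.ceil_le.2 <| div_le_of_le_mul₀ (mul_nonneg d.cast_nonneg hη0) X.card.cast_nonneg <|
      hval ▸ SimpleGraph.sum_le_card_mul_of_separates hd hdisj hη0 hf0 hends hcong hX
  obtain ⟨Q, hQ, hpaths, hQdisj⟩ := G.hasDisjointPaths_of_forall_separates S T _ hsep
  exact ⟨Q, hQ, hpaths, fun q hq r hr hne => hQdisj hq hr hne⟩
end
end

section
/- Let G = (V,E) be a graph and C ⊆ V a cluster whose boundary Γ(C) is α-well-linked in G[C], for some 0 < α ≤ 1. Let (A,B) be a minimum ρ-balanced cut of G[C] with respect to Γ(C), for some 0 < ρ ≤ 1/4, with |Γ(C) ∩ A| ≥ |Γ(C) ∩ B|. Then the boundary of A in G is α/(2+α)-well-linked in G[A]. -/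
attribute [local instance] Classical.propDecidable

noncomputable section

variable {V : Type}

/-!
Let `(X, Y)` be a cut of `A`, `X` being the side holding less of `Γ(C)`. Since `ρ ≤ 1/4`, `Y`
still holds a `ρ`-fraction of `Γ(C)`, so `(Y, X ∪ B)` is again balanced and minimality of `(A, B)`
gives `e(X, B) ≤ e(X, Y)`. Well-linkedness of `Γ(C)` routes `Γ(C) ∩ X` out of `X`, so
`α |Γ(C) ∩ X| ≤ e(X, Y) + e(X, B)`, and every vertex of `Γ(A) ∩ X` outside `Γ(C)` has an edge to
`B`. Together, `α · min(|Γ(A) ∩ X|, |Γ(A) ∩ Y|) ≤ (2 + α) e(X, Y)`. By max-flow min-cut (a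
maximum flow exists by compactness, and the residual network of a maximum flow exhibits a tight
cut) followed by a decomposition of the flow into walks, this cut condition yields the required
flows of congestion `(2 + α)/α` in `G[A]`.
-/

open Finset

namespace SimpleGraph

variable {G : SimpleGraph V}

namespace Walk

variable {u v x y : V}

def stepCount (w : G.Walk u v) (x y : V) : ℕ :=
  (w.darts.map Dart.toProd).count (x, y)

@[simp] lemma stepCount_nil : (nil : G.Walk u u).stepCount x y = 0 := rfl

@[simp] lemma stepCount_cons {c : V} (h : G.Adj u c) (w : G.Walk c v) :
    (cons h w).stepCount x y = w.stepCount x y + if (u, c) = (x, y) then 1 else 0 := by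
  simp [stepCount, List.count_cons]

lemma stepCount_pos_iff (w : G.Walk u v) :
    0 < w.stepCount x y ↔ ∃ d ∈ w.darts, d.toProd = (x, y) := by
  simp [stepCount]

lemma one_le_stepCount_add_stepCount (w : G.Walk u v) (he : s(x, y) ∈ w.edges) :
    1 ≤ w.stepCount x y + w.stepCount y x := by
  obtain ⟨d, hd, hdxy⟩ := List.mem_map.mp (w.edges_eq_map_darts ▸ he)
  rcases Sym2.eq_iff.mp hdxy with ⟨h1, h2⟩ | ⟨h1, h2⟩
  · have := (w.stepCount_pos_iff (x := x) (y := y)).2 ⟨d, hd, Prod.ext h1 h2⟩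
    omega
  · have := (w.stepCount_pos_iff (x := y) (y := x)).2 ⟨d, hd, Prod.ext h1 h2⟩
    omega

lemma sum_stepCount_sub_stepCount [Fintype V] (w : G.Walk u v) (x : V) :
    ∑ y, ((w.stepCount x y : ℝ) - w.stepCount y x) =
      (if x = u then 1 else 0) - if x = v then 1 else 0 := by
  induction w with
  | nil => simp
  | @cons a c b h w ih =>
    have hout : ∑ y, (if (a, c) = (x, y) then 1 else 0 : ℝ) = if x = a then 1 else 0 := by
      by_cases hxa : x = a <;> simp [hxa, eq_comm]
    have hin : ∑ y, (if (a, c) = (y, x) then 1 else 0 : ℝ) = if x = c then 1 else 0 := by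
      by_cases hxc : x = c <;> simp [hxc, eq_comm]
    simp only [stepCount_cons, Nat.cast_add, Nat.cast_ite, Nat.cast_one, Nat.cast_zero,
      add_sub_add_comm, sum_add_distrib, sum_sub_distrib, ih, hout, hin]
    ring

lemma mem_support_iff_eq_or_exists_dart (w : G.Walk u v) :
    x ∈ w.support ↔ x = u ∨ ∃ d ∈ w.darts, d.snd = x := by
  rw [← w.cons_map_snd_darts]
  simp

end Walk

lemma exists_walk_of_reflTransGen {r : V → V → Prop} (hr : ∀ x y, r x y → G.Adj x y) {a b : V}
    (h : Relation.ReflTransGen r a b) : ∃ w : G.Walk a b, ∀ d ∈ w.darts, r d.fst d.snd := by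
  induction h using Relation.ReflTransGen.head_induction_on with
  | refl => exact ⟨.nil, by simp⟩
  | head hab _ ih =>
    obtain ⟨w, hw⟩ := ih
    exact ⟨.cons (hr _ _ hab) w, by simpa [hab] using hw⟩

end SimpleGraph

lemma card_inter_union_of_disjoint {s X Y : Finset V} (h : Disjoint X Y) :
    #(s ∩ (X ∪ Y)) = #(s ∩ X) + #(s ∩ Y) := by
  rw [inter_union_distrib_left,
    card_union_of_disjoint (h.mono inter_subset_right inter_subset_right)]

lemma card_inter_le_card_inter_add_min {Γ T₁ T₂ X Y : Finset V} (h₁ : T₁ ⊆ Γ) (h₂ : T₂ ⊆ Γ)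
    (hΓ : Γ ⊆ X ∪ Y) (hcard : #T₁ = #T₂) :
    #(T₁ ∩ X) ≤ #(T₂ ∩ X) + min #(Γ ∩ X) #(Γ ∩ Y) := by
  rw [← min_add_add_left]
  refine le_min (le_add_left (card_le_card (inter_subset_inter_right h₁))) ?_
  calc #(T₁ ∩ X) ≤ #T₂ := hcard ▸ card_le_card inter_subset_left
    _ ≤ #((T₂ ∩ X) ∪ (T₂ ∩ Y)) := by
      rw [← inter_union_distrib_left, inter_eq_left.mpr (h₂.trans hΓ)]
    _ ≤ #(T₂ ∩ X) + #(Γ ∩ Y) :=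
      (card_union_le _ _).trans (Nat.add_le_add_left (card_le_card (inter_subset_inter_right h₂)) _)

lemma card_pos_le_card_pos {α : Type*} [Fintype α] {f g : α → ℝ} (hfg : ∀ x, f x ≤ g x) :
    #{x | 0 < f x} ≤ #{x | 0 < g x} :=
  card_le_card (monotone_filter_right _ fun x _ hx => hx.trans_le (hfg x))

lemma card_pos_lt_card_pos {α : Type*} [Fintype α] {f g : α → ℝ} (hfg : ∀ x, f x ≤ g x)
    {x₀ : α} (hg : 0 < g x₀) (hf : f x₀ ≤ 0) : #{x | 0 < f x} < #{x | 0 < g x} :=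
  card_lt_card <| (ssubset_iff_of_subset <|
    monotone_filter_right _ fun x _ hx => hx.trans_le (hfg x)).mpr
      ⟨x₀, by simpa using hg, by simpa using hf⟩

lemma card_pos_add_card_pos_add_card_pos_lt {ι κ : Type*} [Fintype ι] [Fintype κ]
    {f f' : ι → ℝ} {g g' h h' : κ → ℝ} (hf : ∀ i, f' i ≤ f i) (hg : ∀ k, g' k ≤ g k)
    (hh : ∀ k, h' k ≤ h k)
    (hex : (∃ i, 0 < f i ∧ f' i ≤ 0) ∨ (∃ k, 0 < g k ∧ g' k ≤ 0) ∨ ∃ k, 0 < h k ∧ h' k ≤ 0) :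
    #{i | 0 < f' i} + #{k | 0 < g' k} + #{k | 0 < h' k} <
      #{i | 0 < f i} + #{k | 0 < g k} + #{k | 0 < h k} := by
  have e₁ := card_pos_le_card_pos hf
  have e₂ := card_pos_le_card_pos hg
  have e₃ := card_pos_le_card_pos hh
  rcases hex with ⟨i, h₁, h₂⟩ | ⟨k, h₁, h₂⟩ | ⟨k, h₁, h₂⟩
  · have := card_pos_lt_card_pos hf h₁ h₂; omega
  · have := card_pos_lt_card_pos hg h₁ h₂; omega
  · have := card_pos_lt_card_pos hh h₁ h₂; omega

lemma Finsupp.sum_filter_eq_linearCombination {α : Type*} (μ : α →₀ ℝ) (P : α → Prop)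
    [DecidablePred P] :
    ∑ p ∈ μ.support with P p, μ p =
      Finsupp.linearCombination ℝ (fun p => if P p then 1 else 0) μ := by
  simp [Finsupp.linearCombination_apply, Finsupp.sum, sum_filter]

lemma Finsupp.mul_le_linearCombination {α : Type*} {μ : α →₀ ℝ} {φ : α → ℝ} (hμ : ∀ p, 0 ≤ μ p)
    (hφ : ∀ p, 0 ≤ φ p) (p : α) : μ p * φ p ≤ Finsupp.linearCombination ℝ φ μ := by
  rw [Finsupp.linearCombination_apply, Finsupp.sum]
  by_cases hp : p ∈ μ.support
  · exact Finset.single_le_sum (f := fun p => μ p • φ p) (fun q _ => mul_nonneg (hμ q) (hφ q)) hp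
  · rw [Finsupp.notMem_support_iff.mp hp, zero_mul]
    exact Finset.sum_nonneg fun q _ => mul_nonneg (hμ q) (hφ q)

lemma sum_filter_mem_edges_le {G : SimpleGraph V} {μ : (Σ u v : V, G.Walk u v) →₀ ℝ}
    (hμ : ∀ p, 0 ≤ μ p) (x y : V) :
    ∑ p ∈ μ.support with s(x, y) ∈ p.2.2.edges, μ p ≤
      Finsupp.linearCombination ℝ (fun p => (p.2.2.stepCount x y : ℝ)) μ +
        Finsupp.linearCombination ℝ (fun p => (p.2.2.stepCount y x : ℝ)) μ := by
  simp only [Finsupp.linearCombination_apply, Finsupp.sum, smul_eq_mul, ← sum_add_distrib,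
    ← mul_add, sum_filter]
  refine sum_le_sum fun p _ => ?_
  split_ifs with he
  · have : (1 : ℝ) ≤ p.2.2.stepCount x y + p.2.2.stepCount y x := by
      exact_mod_cast p.2.2.one_le_stepCount_add_stepCount he
    nlinarith [hμ p]
  · exact mul_nonneg (hμ p) (by positivity)

section Cuts

variable (G : SimpleGraph V)

lemma cutCard_comm (X Y : Finset V) : cutCard G X Y = cutCard G Y X := by
  unfold cutCard
  refine card_bij (fun ab _ => ab.swap) (by simp +contextual [G.adj_comm]) (by simp) ?_
  rintro ⟨a, b⟩ hab
  exact ⟨(b, a), by simpa [G.adj_comm, and_comm] using hab, rfl⟩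

lemma cutCard_union_left {X Y : Finset V} (h : Disjoint X Y) (Z : Finset V) :
    cutCard G (X ∪ Y) Z = cutCard G X Z + cutCard G Y Z := by
  unfold cutCard
  rw [union_product, filter_union, card_union_of_disjoint]
  exact disjoint_filter_filter (disjoint_product.mpr (.inl h))

lemma cutCard_union_right (X : Finset V) {Y Z : Finset V} (h : Disjoint Y Z) :
    cutCard G X (Y ∪ Z) = cutCard G X Y + cutCard G X Z := by
  rw [cutCard_comm, cutCard_union_left G h, cutCard_comm G Y, cutCard_comm G Z]

variable {G}

lemma bdry_subset (C : Finset V) : bdry G C ⊆ C := filter_subset _ _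

/-- A vertex on the boundary of `A ⊆ C` but not on that of `C` has a neighbour in `C \ A`. -/
lemma card_bdry_inter_le {A C X : Finset V} (hAC : A ⊆ C) :
    #(bdry G A ∩ X) ≤ #(bdry G C ∩ X) + cutCard G X (C \ A) := by
  set E := (X ×ˢ (C \ A)).filter fun ab => G.Adj ab.1 ab.2
  have hsub : bdry G A ∩ X ⊆ (bdry G C ∩ X) ∪ E.image Prod.fst := by
    intro v hv
    obtain ⟨⟨hvA, u, huA, hvu⟩, hvX⟩ : (v ∈ A ∧ ∃ u, u ∉ A ∧ G.Adj v u) ∧ v ∈ X := by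
      simpa [bdry] using hv
    by_cases huC : u ∈ C
    · exact mem_union_right _ (mem_image.mpr ⟨(v, u), by simp [E, hvX, huC, huA, hvu], rfl⟩)
    · exact mem_union_left _ (mem_inter.mpr ⟨mem_filter.mpr ⟨hAC hvA, u, huC, hvu⟩, hvX⟩)
  calc #(bdry G A ∩ X) ≤ #(bdry G C ∩ X) + #(E.image Prod.fst) :=
        (card_le_card hsub).trans (card_union_le _ _)
    _ ≤ #(bdry G C ∩ X) + cutCard G X (C \ A) := Nat.add_le_add_left card_image_le _

end Cuts

/-- Every path of a flow from `S ⊆ X` to `T` outside `X` crosses the cut `(X, C \ X)`. -/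
lemma HasUnitFlowIn.card_le_mul_cutCard {G : SimpleGraph V} {C S T X : Finset V} {η : ℝ}
    (hf : HasUnitFlowIn G C S T η) (hη : 0 ≤ η) (hSX : S ⊆ X) (hTX : Disjoint T X) :
    (#S : ℝ) ≤ η * cutCard G X (C \ X) := by
  obtain ⟨P, f, hf0, hends, hsupp, hsrc, -, hcong⟩ := hf
  set E : Finset (Sym2 V) :=
    ((X ×ˢ (C \ X)).filter fun ab => G.Adj ab.1 ab.2).image fun ab => s(ab.1, ab.2)
  have hcross : ∀ p ∈ P, ∃ e ∈ E, e ∈ p.2.2.edges := by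
    intro p hp
    obtain ⟨d, hd, hdX, hdX'⟩ := p.2.2.exists_boundary_dart X (hSX (hends p hp).1)
      (disjoint_left.mp hTX (hends p hp).2)
    refine ⟨d.edge, mem_image.mpr ⟨d.toProd, ?_, rfl⟩, List.mem_map_of_mem hd⟩
    simp only [mem_filter, mem_product, mem_sdiff]
    exact ⟨⟨hdX, hsupp p hp _ (p.2.2.dart_snd_mem_support_of_mem_darts hd), hdX'⟩, d.adj⟩
  calc (#S : ℝ) = ∑ p ∈ P, f p := by
        rw [← sum_fiberwise_of_maps_to fun p hp => (hends p hp).1, sum_congr rfl hsrc]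
        simp
    _ ≤ ∑ p ∈ P, ∑ e ∈ E, if e ∈ p.2.2.edges then f p else 0 := by
        refine sum_le_sum fun p hp => ?_
        obtain ⟨e, he, hep⟩ := hcross p hp
        refine (if_pos hep).symm.le.trans
          (single_le_sum (f := fun e => if e ∈ p.2.2.edges then f p else 0) ?_ he)
        intro e _
        split_ifs <;> simp [hf0 p hp]
    _ = ∑ e ∈ E, ∑ p ∈ P with e ∈ p.2.2.edges, f p := by
        rw [sum_comm]; simp_rw [sum_filter]
    _ ≤ ∑ _e ∈ E, η := sum_le_sum fun e _ => hcong e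
    _ ≤ η * cutCard G X (C \ X) := by
        rw [sum_const, nsmul_eq_mul, mul_comm]
        exact mul_le_mul_of_nonneg_left (by exact_mod_cast card_image_le) hη

lemma WellLinkedIn.mul_card_inter_le_cutCard {G : SimpleGraph V} {C Γ X : Finset V} {α : ℝ}
    (hwl : WellLinkedIn G C Γ α) (hα : 0 < α) (hX : #(Γ ∩ X) ≤ #(Γ \ X)) :
    α * #(Γ ∩ X) ≤ cutCard G X (C \ X) := by
  obtain ⟨T, hT, hTcard⟩ := exists_subset_card_eq hX
  have hflow := hwl (Γ ∩ X) T inter_subset_left (hT.trans sdiff_subset)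
    (disjoint_left.mpr fun v hv hvT => (mem_sdiff.mp (hT hvT)).2 (mem_inter.mp hv).2) hTcard.symm
  have := hflow.card_le_mul_cutCard (by positivity) inter_subset_right
    (disjoint_left.mpr fun v hvT => (mem_sdiff.mp (hT hvT)).2)
  rwa [one_div, ← div_eq_inv_mul, le_div_iff₀ hα, mul_comm] at this

section MinimumBalancedCut

variable {G : SimpleGraph V} {C A B : Finset V} {ρ : ℝ}

/-- Moving the part `X` of `A` holding less of `Γ` over to `B` keeps the cut balanced, since
`Y = A \ X` keeps half of `Γ ∩ A`, hence a quarter of `Γ`. -/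
lemma IsBalancedCut.union_of_card_inter_le {Γ X Y : Finset V} (hbal : IsBalancedCut Γ A B C ρ)
    (hΓC : Γ ⊆ C) (hρ4 : ρ ≤ 1 / 4) (hAB : #(B ∩ Γ) ≤ #(A ∩ Γ)) (hXY : X ∪ Y = A)
    (hdXY : Disjoint X Y) (hord : #(Γ ∩ X) ≤ #(Γ ∩ Y)) : IsBalancedCut Γ Y (X ∪ B) C ρ := by
  obtain ⟨hABC, hdAB, -, hB⟩ := hbal
  refine ⟨by rw [← hABC, ← hXY, union_left_comm, union_assoc],
    disjoint_union_right.mpr ⟨hdXY.symm, hdAB.mono_left (hXY ▸ subset_union_right)⟩, ?_,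
    hB.trans (by exact_mod_cast card_le_card (inter_subset_inter_right subset_union_right))⟩
  have hΓ : #Γ = #(Γ ∩ X) + #(Γ ∩ Y) + #(Γ ∩ B) := by
    rw [← card_inter_union_of_disjoint hdXY, hXY, ← card_inter_union_of_disjoint hdAB, hABC,
      inter_eq_left.mpr hΓC]
  have hBA : #(Γ ∩ B) ≤ #(Γ ∩ X) + #(Γ ∩ Y) := by
    rw [← card_inter_union_of_disjoint hdXY, hXY, inter_comm Γ, inter_comm Γ]; exact hAB
  have : (#Γ : ℝ) ≤ 4 * #(Γ ∩ Y) := by exact_mod_cast (by omega : #Γ ≤ 4 * #(Γ ∩ Y))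
  rw [inter_comm]
  nlinarith [(Nat.cast_nonneg #Γ : (0 : ℝ) ≤ #Γ)]

lemma cutCard_le_of_le_cutCard_union {X Y : Finset V} (hXY : X ∪ Y = A) (hdXY : Disjoint X Y)
    (hdAB : Disjoint A B) (h : cutCard G A B ≤ cutCard G Y (X ∪ B)) :
    cutCard G X B ≤ cutCard G X Y := by
  rw [← hXY, cutCard_union_left G hdXY,
    cutCard_union_right G Y (hdAB.mono_left (hXY ▸ subset_union_left)), cutCard_comm G Y X] at h
  omega

lemma mul_min_card_bdry_le_cutCard {α : ℝ} (hα : 0 < α) (hwl : WellLinkedIn G C (bdry G C) α)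
    (hρ4 : ρ ≤ 1 / 4) (hbal : IsBalancedCut (bdry G C) A B C ρ)
    (hmincut : ∀ A' B' : Finset V, IsBalancedCut (bdry G C) A' B' C ρ →
      cutCard G A B ≤ cutCard G A' B')
    (hAB : #(B ∩ bdry G C) ≤ #(A ∩ bdry G C))
    {X Y : Finset V} (hXY : X ∪ Y = A) (hdXY : Disjoint X Y) :
    α * min (#(bdry G A ∩ X) : ℝ) #(bdry G A ∩ Y) ≤ (2 + α) * cutCard G X Y := by
  wlog hord : #(bdry G C ∩ X) ≤ #(bdry G C ∩ Y) generalizing X Y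
  · have := this (union_comm X Y ▸ hXY) hdXY.symm (by omega)
    rwa [min_comm, cutCard_comm] at this
  set Γ := bdry G C
  have hABC : A ∪ B = C := hbal.1
  have hdAB : Disjoint A B := hbal.2.1
  have hXB : cutCard G X B ≤ cutCard G X Y := cutCard_le_of_le_cutCard_union hXY hdXY hdAB
    (hmincut _ _ (hbal.union_of_card_inter_le (bdry_subset C) hρ4 hAB hXY hdXY hord))
  have hwlX : α * #(Γ ∩ X) ≤ cutCard G X Y + cutCard G X B := by
    have hCX : C \ X = Y ∪ B := by
      rw [← hABC, ← hXY, union_assoc, union_sdiff_cancel_left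
        (disjoint_union_right.mpr ⟨hdXY, hdAB.mono_left (hXY ▸ subset_union_left)⟩)]
    have hΓX : #(Γ ∩ X) ≤ #(Γ \ X) :=
      hord.trans (card_le_card fun v hv => mem_sdiff.mpr ⟨(mem_inter.mp hv).1,
        disjoint_right.mp hdXY (mem_inter.mp hv).2⟩)
    have := hwl.mul_card_inter_le_cutCard hα hΓX
    rwa [hCX, cutCard_union_right G X (hdAB.mono_left (hXY ▸ subset_union_right)),
      Nat.cast_add] at this
  have hbdry : #(bdry G A ∩ X) ≤ #(Γ ∩ X) + cutCard G X B := by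
    have := card_bdry_inter_le (G := G) (X := X) (hABC ▸ subset_union_left : A ⊆ C)
    rwa [← hABC, union_sdiff_cancel_left hdAB, hABC] at this
  have hbdry' : (#(bdry G A ∩ X) : ℝ) ≤ #(Γ ∩ X) + cutCard G X B := by exact_mod_cast hbdry
  have hXB' : (cutCard G X B : ℝ) ≤ cutCard G X Y := by exact_mod_cast hXB
  calc α * min (#(bdry G A ∩ X) : ℝ) #(bdry G A ∩ Y) ≤ α * (#(Γ ∩ X) + cutCard G X B) :=
        mul_le_mul_of_nonneg_left ((min_le_left _ _).trans hbdry') hα.le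
    _ ≤ (2 + α) * cutCard G X Y := by nlinarith

end MinimumBalancedCut

section Network

open Filter Topology

variable [Fintype V]

def outflow (f : V → V → ℝ) (x : V) : ℝ := ∑ y, f x y

/-- A flow from `S` to `T` within the capacities `c`, recorded as a skew-symmetric net flow, in
which every vertex of `S` emits and every vertex of `T` absorbs at most one unit. -/
structure IsSubunitFlow (c : V → V → ℝ) (S T : Finset V) (f : V → V → ℝ) : Prop where
  skew : ∀ x y, f y x = -f x y
  le_cap : ∀ x y, f x y ≤ c x y
  outflow_le : ∀ x, outflow f x ≤ if x ∈ S then 1 else 0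
  le_outflow : ∀ x, -(if x ∈ T then 1 else 0) ≤ outflow f x

lemma sum_outflow_eq_sum_sum_compl {f : V → V → ℝ} (hf : ∀ x y, f y x = -f x y)
    (R : Finset V) : ∑ x ∈ R, outflow f x = ∑ x ∈ R, ∑ y ∈ Rᶜ, f x y := by
  have hR : ∑ x ∈ R, ∑ y ∈ R, f x y = ∑ x ∈ R, ∑ y ∈ R, -f x y := by
    rw [sum_comm]
    exact sum_congr rfl fun y _ => sum_congr rfl fun x _ => hf y x
  simp only [sum_neg_distrib] at hR
  simp only [outflow, ← sum_add_sum_compl R, sum_add_distrib]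
  linarith

lemma sum_outflow_eq_zero {f : V → V → ℝ} (hf : ∀ x y, f y x = -f x y) :
    ∑ x, outflow f x = 0 := by
  simp [sum_outflow_eq_sum_sum_compl hf]

lemma continuous_outflow (x : V) : Continuous fun f : V → V → ℝ => outflow f x := by
  unfold outflow; fun_prop

lemma isCompact_setOf_isSubunitFlow (c : V → V → ℝ) (S T : Finset V) :
    IsCompact {f | IsSubunitFlow c S T f} := by
  have hclosed : IsClosed {f | IsSubunitFlow c S T f} := by
    have : {f | IsSubunitFlow c S T f} = {f : V → V → ℝ | ∀ x y, f y x = -f x y} ∩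
        {f | ∀ x y, f x y ≤ c x y} ∩ {f | ∀ x, outflow f x ≤ if x ∈ S then 1 else 0} ∩
        {f | ∀ x, -(if x ∈ T then 1 else 0) ≤ outflow f x} := by
      ext f
      exact ⟨fun ⟨h₁, h₂, h₃, h₄⟩ => ⟨⟨⟨h₁, h₂⟩, h₃⟩, h₄⟩,
        fun ⟨⟨⟨h₁, h₂⟩, h₃⟩, h₄⟩ => ⟨h₁, h₂, h₃, h₄⟩⟩
    rw [this]
    simp only [Set.ofPred_forall]
    refine .inter (.inter (.inter ?_ ?_) ?_) ?_
    · exact isClosed_iInter fun x => isClosed_iInter fun y =>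
        isClosed_eq (by fun_prop) (by fun_prop)
    · exact isClosed_iInter fun x => isClosed_iInter fun y =>
        isClosed_le (by fun_prop) (by fun_prop)
    · exact isClosed_iInter fun x => isClosed_le (continuous_outflow x) continuous_const
    · exact isClosed_iInter fun x => isClosed_le continuous_const (continuous_outflow x)
  refine (isCompact_univ_pi fun x => isCompact_univ_pi fun y =>
    isCompact_Icc (a := -c y x) (b := c x y)).of_isClosed_subset hclosed fun f hf => ?_
  simp only [Set.mem_pi, Set.mem_univ, Set.mem_Icc, forall_const]
  exact fun x y => ⟨by linarith [hf.skew x y, hf.le_cap y x], hf.le_cap x y⟩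

lemma exists_isSubunitFlow_isMaxOn {c : V → V → ℝ} (hc : ∀ x y, 0 ≤ c x y) (S T : Finset V) :
    ∃ f, IsSubunitFlow c S T f ∧
      ∀ g, IsSubunitFlow c S T g → ∑ x ∈ S, outflow g x ≤ ∑ x ∈ S, outflow f x := by
  have hzero : IsSubunitFlow c S T 0 := by
    refine ⟨by simp, hc, fun x => ?_, fun x => ?_⟩ <;>
      simp only [outflow, Pi.zero_apply, sum_const_zero] <;> split_ifs <;> norm_num
  obtain ⟨f, hf, hmax⟩ := (isCompact_setOf_isSubunitFlow c S T).exists_isMaxOn ⟨0, hzero⟩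
    (f := fun f => ∑ x ∈ S, outflow f x)
    (continuous_finsetSum _ fun x _ => continuous_outflow x).continuousOn
  exact ⟨f, hf, fun g hg => hmax hg⟩

lemma eventually_mul_le {g d : ℝ} (hd : 0 ≤ d) (hgd : 0 < g → 0 < d) :
    ∀ᶠ ε in 𝓝[>] (0 : ℝ), ε * g ≤ d := by
  rcases le_or_gt g 0 with hg | hg
  · filter_upwards [self_mem_nhdsWithin] with ε hε
    nlinarith [mul_nonpos_of_nonneg_of_nonpos (le_of_lt hε) hg]
  · have : Tendsto (fun ε : ℝ => ε * g) (𝓝[>] 0) (𝓝 0) :=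
      (Continuous.tendsto' (by fun_prop) 0 0 (zero_mul g)).mono_left nhdsWithin_le_nhds
    exact (this.eventually_lt_const (hgd hg)).mono fun _ => le_of_lt

variable {c : V → V → ℝ} {S T : Finset V} {f : V → V → ℝ}

/-- Augmenting along a residual path from an unsaturated source to an unsaturated sink. -/
lemma IsSubunitFlow.exists_sum_outflow_lt (hf : IsSubunitFlow c S T f) (hST : Disjoint S T)
    {a b : V} (ha : a ∈ S) (hfa : outflow f a < 1) (hb : b ∈ T) (hfb : -1 < outflow f b)
    (hab : Relation.ReflTransGen (fun x y => x ≠ y ∧ f x y < c x y) a b) :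
    ∃ f', IsSubunitFlow c S T f' ∧ ∑ x ∈ S, outflow f x < ∑ x ∈ S, outflow f' x := by
  have hbS : b ∉ S := disjoint_right.mp hST hb
  have haT : a ∉ T := disjoint_left.mp hST ha
  obtain ⟨w, hw⟩ := (⊤ : SimpleGraph V).exists_walk_of_reflTransGen (fun _ _ h => h.1) hab
  set g : V → V → ℝ := fun x y => w.stepCount x y - w.stepCount y x
  have hg : ∀ x y, 0 < g x y → f x y < c x y := fun x y hxy => by
    have hcnt : (0 : ℝ) < w.stepCount x y := by
      linarith [hxy, (Nat.cast_nonneg (w.stepCount y x) : (0 : ℝ) ≤ w.stepCount y x)]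
    obtain ⟨d, hd, hdxy⟩ := w.stepCount_pos_iff.mp (by exact_mod_cast hcnt)
    have := (hw d hd).2
    rwa [hdxy] at this
  obtain ⟨ε, hε, hεa, hεb, hεc⟩ : ∃ ε : ℝ, 0 < ε ∧ ε * 1 ≤ 1 - outflow f a ∧
      ε * 1 ≤ outflow f b + 1 ∧ ∀ x y, ε * g x y ≤ c x y - f x y :=
    (eventually_mem_nhdsWithin.and <| (eventually_mul_le (by linarith) fun _ => by linarith).and <|
      (eventually_mul_le (by linarith) fun _ => by linarith).and <|
      eventually_all.2 fun x => eventually_all.2 fun y =>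
        eventually_mul_le (sub_nonneg.2 (hf.le_cap x y)) fun h => sub_pos.2 (hg x y h)).exists
  have hout : ∀ x, outflow (fun x y => f x y + ε * g x y) x =
      outflow f x + ε * ((if x = a then 1 else 0) - if x = b then 1 else 0) := fun x => by
    simp only [outflow, sum_add_distrib, ← mul_sum, g, w.sum_stepCount_sub_stepCount]
  refine ⟨fun x y => f x y + ε * g x y,
    ⟨fun x y => ?_, fun x y => ?_, fun x => ?_, fun x => ?_⟩, ?_⟩
  · simp only [g, hf.skew x y]; ring
  · linarith [hεc x y]
  · rw [hout]
    have := hf.outflow_le x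
    by_cases hxa : x = a <;> by_cases hxb : x = b <;> simp_all <;> linarith
  · rw [hout]
    have := hf.le_outflow x
    by_cases hxa : x = a <;> by_cases hxb : x = b <;> simp_all <;> linarith
  · simp only [hout, sum_add_distrib, ← mul_sum, sum_sub_distrib, sum_ite_eq', if_pos ha,
      if_neg hbS]
    linarith

/-- The vertices reachable from unsaturated sources in the residual network of a maximum flow
form a cut that the flow saturates, and on which all sinks are saturated. -/
lemma IsSubunitFlow.card_le_sum_outflow (hf : IsSubunitFlow c S T f) (hST : Disjoint S T)
    (hmax : ∀ g, IsSubunitFlow c S T g → ∑ x ∈ S, outflow g x ≤ ∑ x ∈ S, outflow f x)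
    (hcut : ∀ X : Finset V, (#(S ∩ X) : ℝ) ≤ #(T ∩ X) + ∑ x ∈ X, ∑ y ∈ Xᶜ, c x y) :
    (#S : ℝ) ≤ ∑ x ∈ S, outflow f x := by
  set r : V → V → Prop := fun x y => x ≠ y ∧ f x y < c x y
  set R : Finset V := {y | ∃ a ∈ S, outflow f a < 1 ∧ Relation.ReflTransGen r a y}
  have hTR : ∀ b ∈ T, b ∈ R → outflow f b = -1 := by
    intro b hb hbR
    obtain ⟨a, ha, hfa, hab⟩ := (mem_filter.mp hbR).2
    refine le_antisymm (not_lt.mp fun hfb => ?_) (by simpa [hb] using hf.le_outflow b)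
    obtain ⟨f', hf', hlt⟩ := hf.exists_sum_outflow_lt hST ha hfa hb hfb hab
    exact (hmax f' hf').not_gt hlt
  have hSR : ∀ a ∈ S \ R, outflow f a = 1 := fun a ha =>
    le_antisymm (by simpa [(mem_sdiff.mp ha).1] using hf.outflow_le a) <| not_lt.mp fun hfa =>
      (mem_sdiff.mp ha).2 (mem_filter.mpr ⟨mem_univ a, a, (mem_sdiff.mp ha).1, hfa, .refl⟩)
  have hcapR : ∑ x ∈ R, ∑ y ∈ Rᶜ, c x y ≤ ∑ x ∈ R, outflow f x := by
    rw [sum_outflow_eq_sum_sum_compl hf.skew]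
    refine sum_le_sum fun x hx => sum_le_sum fun y hy => not_lt.mp fun hlt => ?_
    obtain ⟨a, ha, hfa, hax⟩ := (mem_filter.mp hx).2
    refine (mem_compl.mp hy) (mem_filter.mpr ⟨mem_univ y, a, ha, hfa, hax.tail ⟨?_, hlt⟩⟩)
    rintro rfl
    exact mem_compl.mp hy hx
  have hsplitR : ∑ x ∈ R, outflow f x ≤ ∑ x ∈ S ∩ R, outflow f x - #(T ∩ R) := by
    calc ∑ x ∈ R, outflow f x
        ≤ ∑ x ∈ R, ((if x ∈ S then outflow f x else 0) - if x ∈ T then 1 else 0) := by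
          refine sum_le_sum fun x hx => ?_
          by_cases hxS : x ∈ S
          · simp [hxS, disjoint_left.mp hST hxS]
          · by_cases hxT : x ∈ T
            · simp [hxS, hxT, hTR x hxT hx]
            · simpa [hxS, hxT] using hf.outflow_le x
      _ = ∑ x ∈ S ∩ R, outflow f x - #(T ∩ R) := by
          rw [sum_sub_distrib, ← sum_filter, sum_boole, filter_mem_eq_inter, filter_mem_eq_inter,
            inter_comm R, inter_comm R]
  rw [← sum_inter_add_sum_sdiff S R, sum_congr rfl hSR, ← card_inter_add_card_sdiff S R]
  simp only [sum_const, nsmul_eq_mul, mul_one, Nat.cast_add]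
  linarith [hcut R]

/-- Max-flow min-cut for unit supplies and demands. -/
theorem exists_isSubunitFlow_outflow_eq (hc : ∀ x y, 0 ≤ c x y) (hST : Disjoint S T)
    (hcard : #S = #T)
    (hcut : ∀ X : Finset V, (#(S ∩ X) : ℝ) ≤ #(T ∩ X) + ∑ x ∈ X, ∑ y ∈ Xᶜ, c x y) :
    ∃ f, IsSubunitFlow c S T f ∧
      ∀ x, outflow f x = (if x ∈ S then 1 else 0) - if x ∈ T then 1 else 0 := by
  obtain ⟨f, hf, hmax⟩ := exists_isSubunitFlow_isMaxOn hc S T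
  have hS : ∀ x ∈ S, outflow f x = 1 := by
    have hle : ∀ x ∈ S, outflow f x ≤ 1 := fun x hx => by simpa [hx] using hf.outflow_le x
    refine (sum_eq_sum_iff_of_le hle).mp (le_antisymm (sum_le_sum hle) ?_)
    simpa using hf.card_le_sum_outflow hST hmax hcut
  -- the defect `outflow f + 1_T - 1_S` is nonnegative and sums to zero
  have hdefect : ∀ x ∈ univ,
      outflow f x + ((if x ∈ T then 1 else 0) - if x ∈ S then 1 else 0) = 0 := by
    refine (sum_eq_zero_iff_of_nonneg fun x _ => ?_).mp ?_
    · by_cases hxS : x ∈ S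
      · simp [hxS, hS x hxS, disjoint_left.mp hST hxS]
      · have := hf.le_outflow x
        simp only [hxS, if_false, sub_zero]
        linarith
    · rw [sum_add_distrib, sum_outflow_eq_zero hf.skew, sum_sub_distrib, sum_boole, sum_boole]
      simp [hcard]
  exact ⟨f, hf, fun x => by linarith [hdefect x (mem_univ x)]⟩

end Network

section Decomposition

variable [Fintype V]

/-- Flow out of a source must reach a sink: the set of vertices reachable along positive flow
has no outgoing flow, so its net outflow cannot be positive. -/
lemma exists_reflTransGen_of_pos {h : V → V → ℝ} {s t : V → ℝ} (hh : ∀ x y, 0 ≤ h x y)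
    (hs : ∀ x, 0 ≤ s x) (hdiv : ∀ x, outflow (fun x y => h x y - h y x) x = s x - t x)
    {a : V} (ha : 0 < s a) : ∃ b, Relation.ReflTransGen (fun x y => 0 < h x y) a b ∧ 0 < t b := by
  by_contra! hno
  set Z : Finset V := {y | Relation.ReflTransGen (fun x y => 0 < h x y) a y}
  have haZ : a ∈ Z := mem_filter.mpr ⟨mem_univ a, .refl⟩
  have hpos : 0 < ∑ x ∈ Z, outflow (fun x y => h x y - h y x) x := by
    simp only [hdiv]
    calc 0 < s a := ha
      _ ≤ ∑ x ∈ Z, s x := single_le_sum (fun x _ => hs x) haZ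
      _ ≤ ∑ x ∈ Z, (s x - t x) := sum_le_sum fun x hx => by linarith [hno x (mem_filter.mp hx).2]
  have hnonpos : ∑ x ∈ Z, outflow (fun x y => h x y - h y x) x ≤ 0 := by
    rw [sum_outflow_eq_sum_sum_compl fun x y => by ring]
    refine sum_nonpos fun x hx => sum_nonpos fun y hy => ?_
    have : h x y = 0 := le_antisymm (not_lt.mp fun hxy => mem_compl.mp hy
      (mem_filter.mpr ⟨mem_univ y, (mem_filter.mp hx).2.tail hxy⟩)) (hh x y)
    linarith [hh y x]
  linarith

variable {G : SimpleGraph V}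

lemma exists_bottleneck {h : V → V → ℝ} (hh : ∀ x y, 0 ≤ h x y) {a b : V} (w : G.Walk a b)
    (hw : ∀ d ∈ w.darts, 0 < h d.fst d.snd) {σ τ : ℝ} (hσ : 0 < σ) (hτ : 0 < τ) :
    ∃ δ, 0 < δ ∧ δ ≤ σ ∧ δ ≤ τ ∧ (∀ x y, δ * w.stepCount x y ≤ h x y) ∧
      (δ = σ ∨ δ = τ ∨ ∃ x y, 0 < h x y ∧ δ * w.stepCount x y = h x y) := by
  set P : Finset (V × V) := {xy | 0 < w.stepCount xy.1 xy.2}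
  have hP : ∀ xy ∈ P, 0 < h xy.1 xy.2 := fun xy hxy => by
    obtain ⟨d, hd, hdxy⟩ := (w.stepCount_pos_iff).mp (mem_filter.mp hxy).2
    have := hw d hd
    rwa [hdxy] at this
  set M := insert σ (insert τ (P.image fun xy => h xy.1 xy.2 / w.stepCount xy.1 xy.2))
  have hM : ∀ z ∈ M, 0 < z := by
    simp only [M, mem_insert, mem_image]
    rintro z (rfl | rfl | ⟨xy, hxy, rfl⟩)
    exacts [hσ, hτ, div_pos (hP xy hxy) (by exact_mod_cast (mem_filter.mp hxy).2)]
  refine ⟨M.min' (insert_nonempty _ _), (lt_min'_iff _ _).mpr hM,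
    min'_le _ _ (mem_insert_self _ _), min'_le _ _ (mem_insert_of_mem (mem_insert_self _ _)),
    fun x y => ?_, ?_⟩
  · by_cases hxy : (x, y) ∈ P
    · have hcnt : (0 : ℝ) < w.stepCount x y := by exact_mod_cast (mem_filter.mp hxy).2
      rw [← le_div_iff₀ hcnt]
      exact min'_le _ _ (mem_insert_of_mem (mem_insert_of_mem (mem_image_of_mem _ hxy)))
    · simp_all [P]
  · have := M.min'_mem (insert_nonempty _ _)
    simp only [M, mem_insert, mem_image] at this
    rcases this with h₁ | h₁ | ⟨xy, hxy, h₁⟩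
    · exact .inl h₁
    · exact .inr (.inl h₁)
    · have hcnt : (0 : ℝ) < w.stepCount xy.1 xy.2 := by exact_mod_cast (mem_filter.mp hxy).2
      refine .inr (.inr ⟨xy.1, xy.2, hP xy hxy, ?_⟩)
      rw [← h₁, div_mul_cancel₀ _ hcnt.ne']


lemma outflow_sub_stepCount {a b : V} (w : G.Walk a b) (h : V → V → ℝ) (δ : ℝ) (x : V) :
    outflow (fun x y => (h x y - δ * w.stepCount x y) - (h y x - δ * w.stepCount y x)) x =
      outflow (fun x y => h x y - h y x) x -
        δ * ((if x = a then 1 else 0) - if x = b then 1 else 0) := by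
  rw [← w.sum_stepCount_sub_stepCount, mul_sum, outflow, outflow, ← sum_sub_distrib]
  exact sum_congr rfl fun y _ => by ring

theorem exists_walk_decomposition {h : V → V → ℝ} {s t : V → ℝ} (hh : ∀ x y, 0 ≤ h x y)
    (hG : ∀ x y, 0 < h x y → G.Adj x y) (hs : ∀ x, 0 ≤ s x) (ht : ∀ x, 0 ≤ t x)
    (hdiv : ∀ x, outflow (fun x y => h x y - h y x) x = s x - t x) :
    ∃ μ : (Σ u v : V, G.Walk u v) →₀ ℝ, (∀ p, 0 ≤ μ p) ∧
      (∀ a, Finsupp.linearCombination ℝ (fun p => if p.1 = a then 1 else 0) μ = s a) ∧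
      (∀ b, Finsupp.linearCombination ℝ (fun p => if p.2.1 = b then 1 else 0) μ = t b) ∧
      ∀ x y, Finsupp.linearCombination ℝ (fun p => (p.2.2.stepCount x y : ℝ)) μ ≤ h x y := by
  obtain ⟨n, hn⟩ : ∃ n, #{xy : V × V | 0 < h xy.1 xy.2} + #{x | 0 < s x} + #{x | 0 < t x} = n :=
    ⟨_, rfl⟩
  induction n using Nat.strong_induction_on generalizing h s t with | _ n ih =>
  by_cases hsa : ∃ a, 0 < s a
  swap
  · push Not at hsa
    have hs0 : ∀ x, s x = 0 := fun x => le_antisymm (hsa x) (hs x)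
    have htot := sum_outflow_eq_zero (f := fun x y => h x y - h y x) fun x y => by ring
    simp only [hdiv, hs0, zero_sub, sum_neg_distrib, neg_eq_zero] at htot
    have ht0 := (sum_eq_zero_iff_of_nonneg fun x _ => ht x).mp htot
    exact ⟨0, fun _ => le_rfl, by simp [hs0], by simp [ht0], fun x y => by simpa using hh x y⟩
  obtain ⟨a, ha⟩ := hsa
  obtain ⟨b, hab, hb⟩ := exists_reflTransGen_of_pos hh hs hdiv ha
  obtain ⟨w, hw⟩ := G.exists_walk_of_reflTransGen hG hab
  obtain ⟨δ, hδ, hδa, hδb, hδh, hδmin⟩ := exists_bottleneck hh w hw ha hb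
  -- remove `δ` units of flow along `w` and decompose the rest
  set h' : V → V → ℝ := fun x y => h x y - δ * w.stepCount x y
  set s' : V → ℝ := fun x => s x - if x = a then δ else 0
  set t' : V → ℝ := fun x => t x - if x = b then δ else 0
  have hh'le : ∀ x y, h' x y ≤ h x y := fun x y => sub_le_self _ (by positivity)
  have hs' : ∀ x, 0 ≤ s' x := fun x => by by_cases hx : x = a <;> simp [s', hx, hs x, hδa]
  have ht' : ∀ x, 0 ≤ t' x := fun x => by by_cases hx : x = b <;> simp [t', hx, ht x, hδb]
  have hdiv' : ∀ x, outflow (fun x y => h' x y - h' y x) x = s' x - t' x := fun x => by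
    simp only [h', outflow_sub_stepCount, hdiv]
    dsimp only [s', t']
    split_ifs <;> ring
  have hlt := card_pos_add_card_pos_add_card_pos_lt (fun xy : V × V => hh'le xy.1 xy.2)
    (fun x => sub_le_self _ (by split_ifs <;> positivity) : ∀ x, s' x ≤ s x)
    (fun x => sub_le_self _ (by split_ifs <;> positivity) : ∀ x, t' x ≤ t x) <| by
      rcases hδmin with rfl | rfl | ⟨x, y, hxy, hδxy⟩
      exacts [.inr (.inl ⟨a, ha, by simp⟩), .inr (.inr ⟨b, hb, by simp⟩),
        .inl ⟨(x, y), hxy, by simp [h', hδxy]⟩]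
  obtain ⟨μ, hμ, hμs, hμt, hμh⟩ := ih _ (hn ▸ hlt) (fun x y => sub_nonneg.2 (hδh x y))
    (fun x y hxy => hG x y (hxy.trans_le (hh'le x y))) hs' ht' hdiv' rfl
  refine ⟨μ + Finsupp.single ⟨a, b, w⟩ δ, fun p => ?_, fun a' => ?_, fun b' => ?_,
    fun x y => ?_⟩ <;>
    simp only [map_add, Finsupp.linearCombination_single, smul_eq_mul, Finsupp.add_apply]
  · exact add_nonneg (hμ p) (by simp only [Finsupp.single_apply]; split_ifs <;> positivity)
  · rw [hμs a']; by_cases h : a = a' <;> simp [s', h, eq_comm]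
  · rw [hμt b']; by_cases h : b = b' <;> simp [t', h, eq_comm]
  · linarith [hμh x y]

end Decomposition

section InducedSubgraph

variable [Fintype V] {G : SimpleGraph V}

def inducedCap (G : SimpleGraph V) (D : Finset V) (η : ℝ) (x y : V) : ℝ :=
  if x ∈ D ∧ y ∈ D ∧ G.Adj x y then η else 0

omit [Fintype V] in
lemma mem_and_adj_of_inducedCap_pos {D : Finset V} {η : ℝ} {x y : V}
    (h : 0 < inducedCap G D η x y) : x ∈ D ∧ y ∈ D ∧ G.Adj x y := by
  by_contra hxy
  simp [inducedCap, hxy] at h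

lemma sum_sum_compl_inducedCap (D X : Finset V) (η : ℝ) :
    ∑ x ∈ X, ∑ y ∈ Xᶜ, inducedCap G D η x y = η * cutCard G (X ∩ D) (D \ X) := by
  simp only [inducedCap]
  rw [← sum_product' (f := fun x y => if x ∈ D ∧ y ∈ D ∧ G.Adj x y then η else 0),
    ← sum_filter, sum_const, nsmul_eq_mul, mul_comm, cutCard]
  congr 3
  ext ⟨x, y⟩
  simp only [mem_filter, mem_product, mem_compl, mem_inter, mem_sdiff]
  tauto

lemma exists_isSubunitFlow_inducedCap {D S T : Finset V} {η : ℝ} (hη : 0 ≤ η) (hSD : S ⊆ D)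
    (hST : Disjoint S T) (hcard : #S = #T)
    (hcut : ∀ X ⊆ D, (#(S ∩ X) : ℝ) ≤ #(T ∩ X) + η * cutCard G X (D \ X)) :
    ∃ f, IsSubunitFlow (inducedCap G D η) S T f ∧
      ∀ x, outflow f x = (if x ∈ S then 1 else 0) - if x ∈ T then 1 else 0 := by
  refine exists_isSubunitFlow_outflow_eq (fun x y => by unfold inducedCap; split_ifs <;> simp [hη])
    hST hcard fun X => ?_
  have hX := hcut (X ∩ D) inter_subset_right
  rw [← inter_assoc S, inter_eq_left.mpr (inter_subset_left.trans hSD),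
    sdiff_inter_self_right] at hX
  have hT : (#(T ∩ (X ∩ D)) : ℝ) ≤ #(T ∩ X) := by
    exact_mod_cast card_le_card (inter_subset_inter_left inter_subset_left)
  rw [sum_sum_compl_inducedCap]
  linarith

lemma IsSubunitFlow.posPart_add_posPart_le {D S T : Finset V} {η : ℝ} {f : V → V → ℝ}
    (hf : IsSubunitFlow (inducedCap G D η) S T f) (hη : 0 ≤ η) (x y : V) :
    (f x y)⁺ + (f y x)⁺ ≤ η := by
  rw [hf.skew x y, posPart_neg, posPart_add_negPart, abs_le]
  have h₁ := hf.le_cap x y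
  have h₂ := hf.le_cap y x
  rw [hf.skew x y] at h₂
  unfold inducedCap at h₁ h₂
  constructor <;> split_ifs at h₁ h₂ <;> linarith

theorem hasUnitFlowIn_of_cut {D S T : Finset V} {η : ℝ} (hη : 0 ≤ η) (hSD : S ⊆ D)
    (hST : Disjoint S T) (hcard : #S = #T)
    (hcut : ∀ X ⊆ D, (#(S ∩ X) : ℝ) ≤ #(T ∩ X) + η * cutCard G X (D \ X)) :
    HasUnitFlowIn G D S T η := by
  obtain ⟨f, hf, hout⟩ := exists_isSubunitFlow_inducedCap hη hSD hST hcard hcut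
  have hfD : ∀ x y, 0 < (f x y)⁺ → x ∈ D ∧ y ∈ D ∧ G.Adj x y := fun x y hxy =>
    mem_and_adj_of_inducedCap_pos ((posPart_pos_iff.mp hxy).trans_le (hf.le_cap x y))
  obtain ⟨μ, hμ, hμS, hμT, hμf⟩ := exists_walk_decomposition (G := G) (h := fun x y => (f x y)⁺)
    (s := fun x => if x ∈ S then 1 else 0) (t := fun x => if x ∈ T then 1 else 0)
    (fun x y => posPart_nonneg _) (fun x y hxy => (hfD x y hxy).2.2)
    (fun x => by positivity) (fun x => by positivity) fun x => by
      have hy : ∀ y, (f x y)⁺ - (f y x)⁺ = f x y := fun y => by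
        rw [hf.skew x y, posPart_neg, posPart_sub_negPart]
      simpa only [outflow, hy] using hout x
  have hweight : ∀ p ∈ μ.support, ∀ {φ : (Σ u v : V, G.Walk u v) → ℝ}, (∀ q, 0 ≤ φ q) →
      0 < φ p → 0 < Finsupp.linearCombination ℝ φ μ := fun p hp φ hφ hφp =>
    (mul_pos ((hμ p).lt_of_ne' (Finsupp.mem_support_iff.mp hp)) hφp).trans_le
      (Finsupp.mul_le_linearCombination hμ hφ p)
  have hends : ∀ p ∈ μ.support, p.1 ∈ S ∧ p.2.1 ∈ T := fun p hp => by
    have hS := (hμS p.1).symm ▸ hweight p hp (fun q => by positivity) (by simp)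
    have hT := (hμT p.2.1).symm ▸ hweight p hp (fun q => by positivity) (by simp)
    constructor
    · by_contra h; simp [h] at hS
    · by_contra h; simp [h] at hT
  refine ⟨μ.support, μ, fun p _ => hμ p, hends, fun p hp x hx => ?_, fun a ha => ?_,
    fun b hb => ?_, fun e => ?_⟩
  · rcases p.2.2.mem_support_iff_eq_or_exists_dart.mp hx with rfl | ⟨d, hd, rfl⟩
    · exact hSD (hends p hp).1
    · refine (hfD _ _ ((hweight p hp (fun q => by positivity) ?_).trans_le (hμf d.fst d.snd))).2.1
      exact_mod_cast p.2.2.stepCount_pos_iff.mpr ⟨d, hd, rfl⟩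
  · simpa [ha] using (Finsupp.sum_filter_eq_linearCombination μ _).trans (hμS a)
  · simpa [hb] using (Finsupp.sum_filter_eq_linearCombination μ _).trans (hμT b)
  · induction e using Sym2.ind with | _ x y =>
    linarith [sum_filter_mem_edges_le hμ x y, hμf x y, hμf y x, hf.posPart_add_posPart_le hη x y]

end InducedSubgraph

theorem stmt4_general [Fintype V] (G : SimpleGraph V) (C : Finset V)
    (α : ℝ) (hα0 : 0 < α)
    (hwl : WellLinkedIn G C (bdry G C) α)
    (ρ : ℝ) (hρ4 : ρ ≤ 1 / 4)
    (A B : Finset V)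
    (hbal : IsBalancedCut (bdry G C) A B C ρ)
    (hmincut : ∀ A' B' : Finset V, IsBalancedCut (bdry G C) A' B' C ρ →
      cutCard G A B ≤ cutCard G A' B')
    (hAB : (B ∩ bdry G C).card ≤ (A ∩ bdry G C).card) :
    WellLinkedIn G A (bdry G A) (α / (2 + α)) := by
  intro T' T'' hT' hT'' hdisj hcard
  refine hasUnitFlowIn_of_cut (by positivity) (hT'.trans (bdry_subset A)) hdisj hcard
    fun X hX => ?_
  have hcore := mul_min_card_bdry_le_cutCard hα0 hwl hρ4 hbal hmincut hAB
    (union_sdiff_of_subset hX) disjoint_sdiff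
  have hT : (#(T' ∩ X) : ℝ) ≤ #(T'' ∩ X) + min (#(bdry G A ∩ X) : ℝ) #(bdry G A ∩ (A \ X)) := by
    exact_mod_cast card_inter_le_card_inter_add_min hT' hT''
      ((bdry_subset A).trans (union_sdiff_of_subset hX).ge) hcard
  have hmin : min (#(bdry G A ∩ X) : ℝ) #(bdry G A ∩ (A \ X)) ≤
      (2 + α) * cutCard G X (A \ X) / α := by
    rw [le_div_iff₀ hα0]; linarith
  rw [one_div_div, div_mul_eq_mul_div]
  linarith

/-- Let `C` be a cluster whose boundary `Γ(C)` is `α`-well-linked in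
`G[C]`, and let `(A,B)` be a minimum `ρ`-balanced cut of `G[C]` with respect to `Γ(C)`
(for `0 < ρ ≤ 1/4`), with `|Γ(C) ∩ A| ≥ |Γ(C) ∩ B|`.  Then the boundary of `A` is
`α/(2+α)`-well-linked in `G[A]`. -/
theorem stmt4 [Fintype V] (G : SimpleGraph V) (C : Finset V)
    (α : ℝ) (hα0 : 0 < α) (hα1 : α ≤ 1)
    (hwl : WellLinkedIn G C (bdry G C) α)
    (ρ : ℝ) (hρ0 : 0 < ρ) (hρ4 : ρ ≤ 1 / 4)
    (A B : Finset V)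
    (hbal : IsBalancedCut (bdry G C) A B C ρ)
    (hmincut : ∀ A' B' : Finset V, IsBalancedCut (bdry G C) A' B' C ρ →
      cutCard G A B ≤ cutCard G A' B')
    (hminside : ∀ A' B' : Finset V, IsBalancedCut (bdry G C) A' B' C ρ →
      cutCard G A' B' = cutCard G A B →
      min ((A ∩ bdry G C).card) ((B ∩ bdry G C).card) ≤
        min ((A' ∩ bdry G C).card) ((B' ∩ bdry G C).card))
    (hAB : (B ∩ bdry G C).card ≤ (A ∩ bdry G C).card) :
    WellLinkedIn G A (bdry G A) (α / (2 + α)) :=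
  stmt4_general G C α hα0 hwl ρ hρ4 A B hbal hmincut hAB
end
end

section
/- Let A = {a₁,…,a_N} be a set of N > 0 elements, and let R₁,…,R_m be multisets of elements of A such that each element appears at most d times in total (counting multiplicity) across all the R_i. Then there exist subsets R'_i ⊆ R_i with |R'_i| = ⌊|R_i|/d⌋ for each i, such that the sets R'₁,…,R'_m are pairwise disjoint and each set contains each element at most once. -/
attribute [local instance] Classical.propDecidable

noncomputable section

/-- Given multisets `R₁, …, R_m` of elements of a nonempty finite set
`A`, where each element appears at most `d` times in total (with multiplicity) across all
the `Rᵢ`, there are pairwise disjoint subsets `R'ᵢ ⊆ Rᵢ` with `|R'ᵢ| = ⌊|Rᵢ|/d⌋`, each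
containing each element at most once. -/
theorem stmt10 {A : Type} [Fintype A] [DecidableEq A] (hN : 0 < Fintype.card A)
    (m d : ℕ) (R : Fin m → Multiset A)
    (hd : ∀ a : A, (∑ i, (R i).count a) ≤ d) :
    ∃ R' : Fin m → Finset A,
      (∀ i, ∀ a ∈ R' i, a ∈ R i) ∧
      (∀ i, (R' i).card = (R i).card / d) ∧
      (∀ i j, i ≠ j → Disjoint (R' i) (R' j)) := by
  classical
  set k : Fin m → ℕ := fun i => (R i).card / d with hk
  have hall : ∀ s : Finset ((i : Fin m) × Fin (k i)),
      s.card ≤ (s.biUnion (fun x => (R x.1).toFinset)).card := by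
    intro s
    set I := s.image Sigma.fst with hI
    have h1 : s.card ≤ ∑ i ∈ I, k i := by
      have hsub : s ⊆ I.sigma (fun i => (Finset.univ : Finset (Fin (k i)))) := by
        intro x hx
        refine Finset.mem_sigma.2 ⟨Finset.mem_image.2 ⟨x, hx, rfl⟩, Finset.mem_univ _⟩
      calc s.card ≤ (I.sigma fun i => (Finset.univ : Finset (Fin (k i)))).card :=
            Finset.card_le_card hsub
        _ = ∑ i ∈ I, k i := by simp [Finset.card_sigma]
    have h2 : s.biUnion (fun x => (R x.1).toFinset) = I.biUnion (fun i => (R i).toFinset) := by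
      ext a
      simp only [Finset.mem_biUnion, hI, Finset.mem_image]
      constructor
      · rintro ⟨x, hx, ha⟩; exact ⟨x.1, ⟨x, hx, rfl⟩, ha⟩
      · rintro ⟨i, ⟨x, hx, rfl⟩, ha⟩; exact ⟨x, hx, ha⟩
    rw [h2]
    set U := I.biUnion fun i => (R i).toFinset with hU
    have h3 : ∑ i ∈ I, (R i).card ≤ U.card * d := by
      have hcard : ∀ i ∈ I, (R i).card = ∑ a ∈ U, (R i).count a := by
        intro i hi
        rw [← Multiset.toFinset_sum_count_eq (R i)]
        apply Finset.sum_subset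
        · intro a ha; exact Finset.mem_biUnion.2 ⟨i, hi, ha⟩
        · intro a _ ha
          simpa [Multiset.count_eq_zero] using ha
      calc ∑ i ∈ I, (R i).card = ∑ i ∈ I, ∑ a ∈ U, (R i).count a :=
            Finset.sum_congr rfl hcard
        _ = ∑ a ∈ U, ∑ i ∈ I, (R i).count a := Finset.sum_comm
        _ ≤ ∑ a ∈ U, d := by
            refine Finset.sum_le_sum fun a _ => ?_
            calc ∑ i ∈ I, (R i).count a ≤ ∑ i, (R i).count a :=
                  Finset.sum_le_sum_of_subset (Finset.subset_univ I)
              _ ≤ d := hd a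
        _ = U.card * d := by rw [Finset.sum_const, smul_eq_mul]
    have h4 : ∑ i ∈ I, k i ≤ U.card := by
      rcases Nat.eq_zero_or_pos d with hd0 | hd0
      · simp [hk, hd0]
      · have hmul : (∑ i ∈ I, k i) * d ≤ U.card * d := by
          calc (∑ i ∈ I, k i) * d = ∑ i ∈ I, k i * d := Finset.sum_mul ..
            _ ≤ ∑ i ∈ I, (R i).card :=
                Finset.sum_le_sum fun i _ => Nat.div_mul_le_self _ _
            _ ≤ U.card * d := h3
        exact Nat.le_of_mul_le_mul_right hmul hd0
    exact h1.trans h4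
  obtain ⟨f, hfinj, hfmem⟩ :=
    (Finset.all_card_le_biUnion_card_iff_exists_injective
      (fun x : (i : Fin m) × Fin (k i) => (R x.1).toFinset)).1 hall
  refine ⟨fun i => Finset.image (fun j : Fin (k i) => f ⟨i, j⟩) Finset.univ, ?_, ?_, ?_⟩
  · intro i a ha
    obtain ⟨j, _, rfl⟩ := Finset.mem_image.1 ha
    exact Multiset.mem_toFinset.1 (hfmem ⟨i, j⟩)
  · intro i
    rw [Finset.card_image_of_injective _ (fun j j' h => by
      have := hfinj h
      exact (Sigma.mk.inj_iff.1 this).2.eq)]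
    simp [hk]
  · intro i j hij
    rw [Finset.disjoint_left]
    intro a hai haj
    obtain ⟨t, _, rfl⟩ := Finset.mem_image.1 hai
    obtain ⟨t', _, ht'⟩ := Finset.mem_image.1 haj
    have := hfinj ht'
    exact hij ((Sigma.mk.inj_iff.1 this).1.symm)
end
end

section
/- Let Ĝ be a directed graph, U₁, U₂ subsets of its vertices, and s a vertex not in U₁ ∪ U₂. Let X₁ be a set of ℓ₁ directed paths from U₁ to s that are pairwise vertex-disjoint except for sharing s, and let X₂ be a set of ℓ₂ such paths from U₂ to s, with ℓ₁ > ℓ₂ ≥ 1. Then there is a set X' of ℓ₁ paths from U₁ ∪ U₂ to s, pairwise vertex-disjoint except at s, together with a partition (X'₁, X'₂) of X' such that |X'₂| = ℓ₂, every path of X'₂ originates in U₂, and X'₁ ⊆ X₁. -/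
/-!
Maintain a subfamily `C ⊆ X₁` and a family `Y` of `ℓ₂` paths from `U₂`, all nearly disjoint,
starting from `C = ∅`, `Y = X₂`. A path of `Y` shares a terminal segment (other than `s`) with
at most one path of `X₁`, so while `|C| + |Y| < ℓ₁` some `R ∈ X₁ \ C` shares none with `Y`.
If `R` meets no path of `Y` away from `s`, it joins `C`. Otherwise let `w` be the last vertex of
`R` other than `s` lying on some `Q ∈ Y`, and replace `Q` by its initial segment up to `w`
followed by the rest of `R`. The new path runs along a path of `X₁` from an earlier index than
`Q` did, because `R` and `Q` share no terminal segment; so `ℓ₁ - |C|` plus the sum of these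
indices over `Y` strictly decreases.
-/

attribute [local instance] Classical.propDecidable

variable {V : Type*}

theorem List.exists_last_eq_append_cons {P : V → Prop} :
    ∀ {l : List V}, (∃ x ∈ l, P x) → ∃ r w t, l = r ++ w :: t ∧ P w ∧ ∀ x ∈ t, ¬ P x
  | [], ⟨_, hx, _⟩ => absurd hx List.not_mem_nil
  | a :: l, ⟨x, hx, hPx⟩ => by
    by_cases hl : ∃ x ∈ l, P x
    · obtain ⟨r, w, t, rfl, hw, ht⟩ := exists_last_eq_append_cons hl
      exact ⟨a :: r, w, t, rfl, hw, ht⟩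
    · refine ⟨[], a, l, rfl, ?_, fun y hy hPy => hl ⟨y, hy, hPy⟩⟩
      rcases List.mem_cons.mp hx with rfl | hx
      · exact hPx
      · exact absurd ⟨x, hx, hPx⟩ hl

theorem List.drop_suffix_drop {l : List V} {m n : ℕ} (h : m ≤ n) : l.drop n <:+ l.drop m := by
  obtain ⟨k, rfl⟩ := Nat.exists_eq_add_of_le h
  rw [← List.drop_drop]
  exact List.drop_suffix _ _

def IsPath (D : V → V → Prop) (A : Set V) (s : V) (l : List V) : Prop :=
  l.IsChain D ∧ l.Nodup ∧ (∃ u ∈ A, l.head? = some u) ∧ l.getLast? = some s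

def MeetsOnlyAt (s : V) (l l' : List V) : Prop := ∀ x ∈ l, x ∈ l' → x = s

def NearlyDisjoint (s : V) (X : Finset (List V)) : Prop :=
  (X : Set (List V)).Pairwise (MeetsOnlyAt s)

def SharesTail (s : V) (Q R : List V) : Prop := ∃ v t, v ≠ s ∧ v :: t <:+ Q ∧ v :: t <:+ R

noncomputable def joinIndex (X : Finset (List V)) (Q : List V) : ℕ := sInf {n | ∃ R ∈ X, Q.drop n <:+ R}

section

variable {D : V → V → Prop} {A B : Set V} {s w : V} {l l' p q r t : List V}

theorem MeetsOnlyAt.symm (h : MeetsOnlyAt s l l') : MeetsOnlyAt s l' l :=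
  fun x hx hx' => h x hx' hx

instance : Std.Symm (MeetsOnlyAt s) := ⟨fun _ _ => MeetsOnlyAt.symm⟩

theorem MeetsOnlyAt.mono_left (h : MeetsOnlyAt s l l') (hl : p ⊆ l) : MeetsOnlyAt s p l' :=
  fun x hx => h x (hl hx)

theorem MeetsOnlyAt.mono_right (h : MeetsOnlyAt s l l') (hl : p ⊆ l') : MeetsOnlyAt s l p :=
  fun x hx hxp => h x hx (hl hxp)

theorem MeetsOnlyAt.append_cons (hq : MeetsOnlyAt s (p ++ w :: q) l) (ht : MeetsOnlyAt s t l) :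
    MeetsOnlyAt s (p ++ w :: t) l := by
  intro x hx
  rcases List.mem_append.mp hx with hx | hx
  · exact hq x (List.mem_append_left _ hx)
  rcases List.mem_cons.mp hx with rfl | hx
  · exact hq x (by simp)
  · exact ht x hx

theorem IsPath.mono (h : IsPath D A s l) (hAB : A ⊆ B) : IsPath D B s l :=
  let ⟨hc, hn, ⟨u, hu, hh⟩, hl⟩ := h
  ⟨hc, hn, ⟨u, hAB hu, hh⟩, hl⟩

theorem IsPath.not_meetsOnlyAt_self (h : IsPath D A s l) (hs : s ∉ A) : ¬ MeetsOnlyAt s l l := by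
  obtain ⟨-, -, ⟨u, hu, hh⟩, -⟩ := h
  have hul : u ∈ l := List.mem_of_mem_head? hh
  exact fun hl => hs (hl u hul hul ▸ hu)

theorem IsPath.splice (hP : IsPath D A s (p ++ w :: q)) (hR : IsPath D B s (r ++ w :: t))
    (htp : MeetsOnlyAt s t p) : IsPath D A s (p ++ w :: t) := by
  obtain ⟨hPc, hPn, hPh, hPl⟩ := hP
  obtain ⟨hRc, hRn, -, hRl⟩ := hR
  rw [List.getLast?_append_cons] at hPl hRl
  have hsq : s ∈ w :: q := List.mem_of_getLast? hPl
  refine ⟨?_, ?_, ?_, by rwa [List.getLast?_append_cons]⟩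
  · rw [List.isChain_append] at hPc hRc ⊢
    exact ⟨hPc.1, hRc.2.1, hPc.2.2⟩
  · rw [List.nodup_append] at hPn hRn ⊢
    refine ⟨hPn.1, hRn.2.1, fun x hxp y hy hxy => ?_⟩
    subst hxy
    rcases List.mem_cons.mp hy with rfl | hxt
    · exact hPn.2.2 x hxp x (by simp) rfl
    · obtain rfl := htp x hxt hxp
      exact hPn.2.2 x hxp x hsq rfl
  · cases p <;> simpa using hPh

theorem SharesTail.not_meetsOnlyAt {Q R₁ R₂ : List V} (h₁ : SharesTail s Q R₁)
    (h₂ : SharesTail s Q R₂) : ¬ MeetsOnlyAt s R₁ R₂ := by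
  obtain ⟨v₁, t₁, hv₁, hQ₁, hR₁⟩ := h₁
  obtain ⟨v₂, t₂, hv₂, hQ₂, hR₂⟩ := h₂
  intro hR
  rcases List.suffix_or_suffix_of_suffix hQ₁ hQ₂ with h | h
  · exact hv₁ (hR v₁ (hR₁.mem List.mem_cons_self) ((h.trans hR₂).mem List.mem_cons_self))
  · exact hv₂ (hR v₂ ((h.trans hR₁).mem List.mem_cons_self) (hR₂.mem List.mem_cons_self))

theorem NearlyDisjoint.mono {X X' : Finset (List V)} (hX : NearlyDisjoint s X) (h : X' ⊆ X) :
    NearlyDisjoint s X' :=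
  Set.Pairwise.mono (Finset.coe_subset.mpr h) hX

theorem NearlyDisjoint.exists_forall_not_sharesTail {X Y : Finset (List V)}
    (hX : NearlyDisjoint s X) (hcard : Y.card < X.card) :
    ∃ R ∈ X, ∀ Q ∈ Y, ¬ SharesTail s Q R := by
  by_contra! h
  choose! f hfY hf using h
  obtain ⟨R₁, hR₁, R₂, hR₂, hne, hfeq⟩ :=
    Finset.exists_ne_map_eq_of_card_lt_of_maps_to hcard fun R hR => hfY R hR
  exact (hf R₁ hR₁).not_meetsOnlyAt (hfeq ▸ hf R₂ hR₂) (hX hR₁ hR₂ hne)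

theorem joinIndex_le_iff {X : Finset (List V)} {Q : List V} {n : ℕ} (hX : X.Nonempty) :
    joinIndex X Q ≤ n ↔ ∃ R ∈ X, Q.drop n <:+ R := by
  refine ⟨fun h => ?_, fun h => Nat.sInf_le h⟩
  obtain ⟨R₀, hR₀⟩ := hX
  obtain ⟨R, hR, hQR⟩ := Nat.sInf_mem (s := {n | ∃ R ∈ X, Q.drop n <:+ R})
    ⟨Q.length, R₀, hR₀, by simp⟩
  exact ⟨R, hR, (List.drop_suffix_drop h).trans hQR⟩

theorem joinIndex_append_cons_lt {X : Finset (List V)} (hX : NearlyDisjoint s X)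
    (hR : r ++ w :: t ∈ X) (hw : w ≠ s) (hQR : ¬ SharesTail s (p ++ w :: q) (r ++ w :: t)) :
    joinIndex X (p ++ w :: t) < joinIndex X (p ++ w :: q) := by
  have hne : X.Nonempty := ⟨_, hR⟩
  calc joinIndex X (p ++ w :: t) ≤ p.length :=
        (joinIndex_le_iff hne).2 ⟨_, hR, by rw [List.drop_left]; exact ⟨r, rfl⟩⟩
    _ < joinIndex X (p ++ w :: q) := by
      by_contra! h
      obtain ⟨R', hR', hqR'⟩ := (joinIndex_le_iff hne).1 h
      rw [List.drop_left] at hqR'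
      obtain rfl : R' = r ++ w :: t := by
        by_contra hR'R
        exact hw (hX hR' hR hR'R w (hqR'.mem List.mem_cons_self) (by simp))
      exact hQR ⟨w, q, hw, ⟨p, rfl⟩, hqR'⟩

/-- `C` collects the paths of `X` kept unchanged, `Y` the current paths from `A`. -/
structure IsPartialRerouting (D : V → V → Prop) (A : Set V) (s : V) (X C Y : Finset (List V)) :
    Prop where
  subset : C ⊆ X
  isPath : ∀ Q ∈ Y, IsPath D A s Q
  nearlyDisjoint : NearlyDisjoint s Y
  meetsOnlyAt : ∀ R ∈ C, ∀ Q ∈ Y, MeetsOnlyAt s R Q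

noncomputable def reroutingPotential (X C Y : Finset (List V)) : ℕ :=
  (X.card - C.card) + ∑ Q ∈ Y, joinIndex X Q

namespace IsPartialRerouting

variable {X C Y : Finset (List V)} {R Q : List V}

theorem insert_left (h : IsPartialRerouting D A s X C Y) (hR : R ∈ X)
    (hRY : ∀ Q ∈ Y, MeetsOnlyAt s R Q) : IsPartialRerouting D A s X (insert R C) Y where
  subset := Finset.insert_subset hR h.subset
  isPath := h.isPath
  nearlyDisjoint := h.nearlyDisjoint
  meetsOnlyAt := Finset.forall_mem_insert _ _ _ |>.2 ⟨hRY, h.meetsOnlyAt⟩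

theorem reroute (h : IsPartialRerouting D A s X C Y) (hX : ∀ R ∈ X, IsPath D B s R)
    (hXnd : NearlyDisjoint s X) (hRX : r ++ w :: t ∈ X) (hRC : r ++ w :: t ∉ C)
    (hQ : p ++ w :: q ∈ Y) (ht : ∀ Q ∈ Y, MeetsOnlyAt s t Q) :
    IsPartialRerouting D A s X C (insert (p ++ w :: t) (Y.erase (p ++ w :: q))) where
  subset := h.subset
  isPath := Finset.forall_mem_insert _ _ _ |>.2
    ⟨(h.isPath _ hQ).splice (hX _ hRX) ((ht _ hQ).mono_right (List.subset_append_left _ _)),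
      fun Q' hQ' => h.isPath Q' (Finset.mem_of_mem_erase hQ')⟩
  nearlyDisjoint := by
    unfold NearlyDisjoint
    rw [Finset.coe_insert, Finset.coe_erase]
    refine (Set.Pairwise.mono Set.sdiff_subset h.nearlyDisjoint).insert_of_symm fun Q' hQ' _ => ?_
    exact (h.nearlyDisjoint hQ hQ'.1 (Ne.symm hQ'.2)).append_cons (ht Q' hQ'.1)
  meetsOnlyAt R' hR' := Finset.forall_mem_insert _ _ _ |>.2
    ⟨MeetsOnlyAt.symm <| (h.meetsOnlyAt R' hR' _ hQ).symm.append_cons <|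
        (hXnd hRX (h.subset hR') (fun hRR' => hRC (hRR' ▸ hR'))).mono_left
          fun _ hx => List.mem_append_right _ (List.mem_cons_of_mem _ hx),
      fun Q' hQ' => h.meetsOnlyAt R' hR' Q' (Finset.mem_of_mem_erase hQ')⟩

theorem exists_step (h : IsPartialRerouting D A s X C Y) (hX : ∀ R ∈ X, IsPath D B s R)
    (hXnd : NearlyDisjoint s X) (hlt : C.card + Y.card < X.card) :
    ∃ C' Y', IsPartialRerouting D A s X C' Y' ∧ Y'.card = Y.card ∧
      C'.card + Y'.card ≤ X.card ∧ reroutingPotential X C' Y' < reroutingPotential X C Y := by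
  have hXC : (X \ C).card = X.card - C.card := Finset.card_sdiff_of_subset h.subset
  obtain ⟨R, hR, hRY⟩ := (hXnd.mono Finset.sdiff_subset).exists_forall_not_sharesTail
    (show Y.card < (X \ C).card by omega)
  obtain ⟨hRX, hRC⟩ := Finset.mem_sdiff.mp hR
  by_cases hmeet : ∀ Q ∈ Y, MeetsOnlyAt s R Q
  · refine ⟨insert R C, Y, h.insert_left hRX hmeet, rfl, ?_, ?_⟩ <;>
      simp only [reroutingPotential, Finset.card_insert_of_notMem hRC] <;> omega
  have hhit : ∃ x ∈ R, x ≠ s ∧ ∃ Q ∈ Y, x ∈ Q := by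
    simp only [MeetsOnlyAt, not_forall] at hmeet
    obtain ⟨Q, hQ, x, hxR, hxQ, hxs⟩ := hmeet
    exact ⟨x, hxR, hxs, Q, hQ, hxQ⟩
  obtain ⟨r, w, t, rfl, ⟨hw, Q, hQ, hwQ⟩, ht⟩ := List.exists_last_eq_append_cons hhit
  obtain ⟨p, q, rfl⟩ := List.append_of_mem hwQ
  have htY : ∀ Q ∈ Y, MeetsOnlyAt s t Q := fun Q hQ x hxt hxQ => by
    by_contra hxs
    exact ht x hxt ⟨hxs, Q, hQ, hxQ⟩
  have hnew : p ++ w :: t ∉ Y.erase (p ++ w :: q) := fun hmem =>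
    hw (h.nearlyDisjoint (Finset.mem_of_mem_erase hmem) hQ (Finset.ne_of_mem_erase hmem) w
      (by simp) (by simp))
  have hcard : (insert (p ++ w :: t) (Y.erase (p ++ w :: q))).card = Y.card := by
    rw [Finset.card_insert_of_notMem hnew, Finset.card_erase_add_one hQ]
  refine ⟨C, _, h.reroute hX hXnd hRX hRC hQ htY, hcard, by omega, ?_⟩
  have hlt' := joinIndex_append_cons_lt hXnd hRX hw (hRY _ hQ)
  have hsum := Finset.sum_erase_add Y (joinIndex X) hQ
  simp only [reroutingPotential, Finset.sum_insert hnew]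
  omega

theorem exists_card_eq (h : IsPartialRerouting D A s X C Y) (hX : ∀ R ∈ X, IsPath D B s R)
    (hXnd : NearlyDisjoint s X) (hcard : C.card + Y.card ≤ X.card) :
    ∃ C' Y', IsPartialRerouting D A s X C' Y' ∧ Y'.card = Y.card ∧
      C'.card + Y'.card = X.card := by
  induction hn : reroutingPotential X C Y using Nat.strong_induction_on generalizing C Y with
  | _ n ih =>
  rcases hcard.eq_or_lt with heq | hlt
  · exact ⟨C, Y, h, rfl, heq⟩
  obtain ⟨C', Y', h', hY', hcard', hpot⟩ := h.exists_step hX hXnd hlt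
  obtain ⟨C'', Y'', h'', hY'', heq⟩ := ih _ (hn ▸ hpot) h' hcard' rfl
  exact ⟨C'', Y'', h'', hY''.trans hY', heq⟩

theorem disjoint (h : IsPartialRerouting D A s X C Y) (hs : s ∉ A) : Disjoint C Y :=
  Finset.disjoint_left.2 fun l hlC hlY =>
    (h.isPath l hlY).not_meetsOnlyAt_self hs (h.meetsOnlyAt l hlC l hlY)

theorem nearlyDisjoint_union (h : IsPartialRerouting D A s X C Y) (hXnd : NearlyDisjoint s X) :
    NearlyDisjoint s (C ∪ Y) := by
  unfold NearlyDisjoint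
  rw [Finset.coe_union, Set.pairwise_union_of_symm]
  exact ⟨hXnd.mono h.subset, h.nearlyDisjoint, fun R hR Q hQ _ => h.meetsOnlyAt R hR Q hQ⟩

end IsPartialRerouting

end

theorem stmt12_general {V : Type} (D : V → V → Prop) (U₁ U₂ : Set V) (s : V)
    (hs : s ∉ U₁ ∪ U₂)
    (X₁ X₂ : Finset (List V)) (ℓ₁ ℓ₂ : ℕ)
    (hX₁card : X₁.card = ℓ₁) (hX₂card : X₂.card = ℓ₂)
    (hℓ : ℓ₂ < ℓ₁)
    (hX₁ : ∀ l ∈ X₁, l.Chain' D ∧ l.Nodup ∧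
      (∃ u ∈ U₁, l.head? = some u) ∧ l.getLast? = some s)
    (hX₂ : ∀ l ∈ X₂, l.Chain' D ∧ l.Nodup ∧
      (∃ u ∈ U₂, l.head? = some u) ∧ l.getLast? = some s)
    (hnd₁ : ∀ l ∈ X₁, ∀ l' ∈ X₁, l ≠ l' → ∀ x, x ∈ l → x ∈ l' → x = s)
    (hnd₂ : ∀ l ∈ X₂, ∀ l' ∈ X₂, l ≠ l' → ∀ x, x ∈ l → x ∈ l' → x = s) :
    ∃ X'₁ X'₂ : Finset (List V),
      Disjoint X'₁ X'₂ ∧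
      (X'₁ ∪ X'₂).card = ℓ₁ ∧
      X'₂.card = ℓ₂ ∧
      X'₁ ⊆ X₁ ∧
      (∀ l ∈ X'₂, ∃ u ∈ U₂, l.head? = some u) ∧
      (∀ l ∈ X'₁ ∪ X'₂, l.Chain' D ∧ l.Nodup ∧
        (∃ u ∈ U₁ ∪ U₂, l.head? = some u) ∧ l.getLast? = some s) ∧
      (∀ l ∈ X'₁ ∪ X'₂, ∀ l' ∈ X'₁ ∪ X'₂, l ≠ l' → ∀ x, x ∈ l → x ∈ l' → x = s) := by
  have hstart : IsPartialRerouting D U₂ s X₁ ∅ X₂ :=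
    ⟨Finset.empty_subset _, hX₂, hnd₂, by simp⟩
  obtain ⟨C, Y, h, hY, hcard⟩ := hstart.exists_card_eq hX₁ hnd₁ (by simp; omega)
  have hdisj := h.disjoint fun hsU₂ => hs (Or.inr hsU₂)
  refine ⟨C, Y, hdisj, by rw [Finset.card_union_of_disjoint hdisj]; omega, by omega, h.subset,
    fun l hl => (h.isPath l hl).2.2.1, fun l hl => ?_, h.nearlyDisjoint_union hnd₁⟩
  rcases Finset.mem_union.mp hl with hl | hl
  · exact IsPath.mono (hX₁ l (h.subset hl)) Set.subset_union_left
  · exact (h.isPath l hl).mono Set.subset_union_right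

/-- Rerouting of nearly disjoint directed path systems
(Conforti–Hassin–Ravi).  A directed path is encoded as a nonempty list of vertices,
forming a chain of the edge relation `D`, with no repeated vertices. -/
theorem stmt12 {V : Type} (D : V → V → Prop) (U₁ U₂ : Set V) (s : V)
    (hs : s ∉ U₁ ∪ U₂)
    (X₁ X₂ : Finset (List V)) (ℓ₁ ℓ₂ : ℕ)
    (hX₁card : X₁.card = ℓ₁) (hX₂card : X₂.card = ℓ₂)
    (hℓ : ℓ₂ < ℓ₁) (hℓ2 : 1 ≤ ℓ₂)
    (hX₁ : ∀ l ∈ X₁, l.Chain' D ∧ l.Nodup ∧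
      (∃ u ∈ U₁, l.head? = some u) ∧ l.getLast? = some s)
    (hX₂ : ∀ l ∈ X₂, l.Chain' D ∧ l.Nodup ∧
      (∃ u ∈ U₂, l.head? = some u) ∧ l.getLast? = some s)
    (hnd₁ : ∀ l ∈ X₁, ∀ l' ∈ X₁, l ≠ l' → ∀ x, x ∈ l → x ∈ l' → x = s)
    (hnd₂ : ∀ l ∈ X₂, ∀ l' ∈ X₂, l ≠ l' → ∀ x, x ∈ l → x ∈ l' → x = s) :
    ∃ X'₁ X'₂ : Finset (List V),
      Disjoint X'₁ X'₂ ∧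
      (X'₁ ∪ X'₂).card = ℓ₁ ∧
      X'₂.card = ℓ₂ ∧
      X'₁ ⊆ X₁ ∧
      (∀ l ∈ X'₂, ∃ u ∈ U₂, l.head? = some u) ∧
      (∀ l ∈ X'₁ ∪ X'₂, l.Chain' D ∧ l.Nodup ∧
        (∃ u ∈ U₁ ∪ U₂, l.head? = some u) ∧ l.getLast? = some s) ∧
      (∀ l ∈ X'₁ ∪ X'₂, ∀ l' ∈ X'₁ ∪ X'₂, l ≠ l' → ∀ x, x ∈ l → x ∈ l' → x = s) :=
  stmt12_general D U₁ U₂ s hs X₁ X₂ ℓ₁ ℓ₂ hX₁card hX₂card hℓ hX₁ hX₂ hnd₁ hnd₂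
end

section
/- Let G be a graph with maximum vertex degree at most 3, and let T₁, T₂ be disjoint vertex subsets with |T₁| = |T₂| = κ such that each of T₁, T₂ is node-well-linked in G and (T₁, T₂) are node-linked in G. Then the set T = T₁ ∪ T₂ is 1/3-well-linked in G. -/
attribute [local instance] Classical.propDecidable

noncomputable section

variable {V : Type}

namespace Stmt14Aux

variable [Fintype V] {G : SimpleGraph V}

lemma sum_ite_filter_union {α : Type*} [DecidableEq α] {P₁ P₂ Q : Finset α}
    (hQ : Q ⊆ P₁ ∪ P₂) (pred : α → Prop) [DecidablePred pred] (g : α → ℝ) :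
    ∑ p ∈ (P₁ ∪ P₂).filter pred, (if p ∈ Q then g p else 0) = ∑ p ∈ Q.filter pred, g p := by
  rw [Finset.sum_ite_mem]
  congr 1
  ext p
  simp only [Finset.mem_inter, Finset.mem_filter, Finset.mem_union]
  constructor
  · rintro ⟨⟨_, h2⟩, h3⟩; exact ⟨h3, h2⟩
  · rintro ⟨h1, h2⟩
    rcases Finset.mem_union.mp (hQ h1) with h | h
    · exact ⟨⟨Or.inl h, h2⟩, h1⟩
    · exact ⟨⟨Or.inr h, h2⟩, h1⟩

/-- In a node-linking family with `|A| = |B|`, every vertex of `B` is the end of some path. -/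
lemma ends_surj {A B : Finset V} {P : Finset (Σ u v : V, G.Walk u v)}
    (hmem : ∀ p ∈ P, p.1 ∈ A ∧ p.2.1 ∈ B)
    (hsrc : ∀ a ∈ A, ∃ p ∈ P, p.1 = a)
    (hdis : ∀ p ∈ P, ∀ q ∈ P, p ≠ q → ∀ x ∈ p.2.2.support, x ∉ q.2.2.support)
    (hcard : A.card = B.card) :
    ∀ b ∈ B, ∃ p ∈ P, p.2.1 = b := by
  have hstart_inj : Set.InjOn (fun p : (Σ u v : V, G.Walk u v) => p.1) P := by
    intro p hp q hq h
    have h' : p.1 = q.1 := h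
    by_contra hne
    exact hdis p hp q hq hne p.1 p.2.2.start_mem_support
      (by rw [h']; exact q.2.2.start_mem_support)
  have hend_inj : Set.InjOn (fun p : (Σ u v : V, G.Walk u v) => p.2.1) P := by
    intro p hp q hq h
    have h' : p.2.1 = q.2.1 := h
    by_contra hne
    exact hdis p hp q hq hne p.2.1 p.2.2.end_mem_support
      (by rw [h']; exact q.2.2.end_mem_support)
  have hS : P.image (fun p => p.1) = A := by
    apply Finset.Subset.antisymm
    · intro a ha
      obtain ⟨p, hp, rfl⟩ := Finset.mem_image.mp ha
      exact (hmem p hp).1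
    · intro a ha
      obtain ⟨p, hp, hpa⟩ := hsrc a ha
      exact Finset.mem_image.mpr ⟨p, hp, hpa⟩
  have hPcard : P.card = A.card := by
    rw [← hS, Finset.card_image_of_injOn hstart_inj]
  have hE : P.image (fun p => p.2.1) = B := by
    apply Finset.eq_of_subset_of_card_le
    · intro b hb
      obtain ⟨p, hp, rfl⟩ := Finset.mem_image.mp hb
      exact (hmem p hp).2
    · rw [Finset.card_image_of_injOn hend_inj, hPcard, hcard]
  intro b hb
  rw [← hE] at hb
  obtain ⟨p, hp, hpb⟩ := Finset.mem_image.mp hb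
  exact ⟨p, hp, hpb⟩

/-- Reversing a node-linking family. -/
lemma nls_reverse {A B : Finset V} (h : NodeLinkedSets G A B) (hcard : A.card = B.card) :
    NodeLinkedSets G B A := by
  obtain ⟨P, hprop, hsrc, hdis⟩ := h
  have hmem : ∀ p ∈ P, p.1 ∈ A ∧ p.2.1 ∈ B := fun p hp => ⟨(hprop p hp).2.1, (hprop p hp).2.2⟩
  have hend := ends_surj hmem hsrc hdis hcard
  classical
  let rev : (Σ u v : V, G.Walk u v) → (Σ u v : V, G.Walk u v) :=
    fun p => ⟨p.2.1, p.1, p.2.2.reverse⟩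
  have hrevrev : ∀ p, rev (rev p) = p := by
    rintro ⟨u, v, w⟩
    simp [rev]
  have hrev_inj : Function.Injective rev := by
    intro p q h
    have := congrArg rev h
    rwa [hrevrev, hrevrev] at this
  refine ⟨P.image rev, ?_, ?_, ?_⟩
  · intro q hq
    obtain ⟨p, hp, rfl⟩ := Finset.mem_image.mp hq
    exact ⟨(hprop p hp).1.reverse, (hmem p hp).2, (hmem p hp).1⟩
  · intro b hb
    obtain ⟨p, hp, hpb⟩ := hend b hb
    exact ⟨rev p, Finset.mem_image_of_mem rev hp, hpb⟩
  · intro q hq q' hq' hne x hx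
    obtain ⟨p, hp, rfl⟩ := Finset.mem_image.mp hq
    obtain ⟨p', hp', rfl⟩ := Finset.mem_image.mp hq'
    have hpne : p ≠ p' := fun h => hne (by rw [h])
    have hx' : x ∈ p.2.2.support := by
      simpa [rev, SimpleGraph.Walk.support_reverse] using hx
    have := hdis p hp p' hp' hpne x hx'
    simpa [rev, SimpleGraph.Walk.support_reverse] using this

/-- A family of vertex-disjoint paths from `A` to `B` with `|A| = |B|` yields a unit
flow of congestion `1`. -/
lemma flow_one {A B : Finset V} (h : NodeLinkedSets G A B) (hcard : A.card = B.card) :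
    HasUnitFlowIn G Finset.univ A B 1 := by
  classical
  obtain ⟨P, hprop, hsrc, hdis⟩ := h
  have hmem : ∀ p ∈ P, p.1 ∈ A ∧ p.2.1 ∈ B := fun p hp => ⟨(hprop p hp).2.1, (hprop p hp).2.2⟩
  have hend := ends_surj hmem hsrc hdis hcard
  refine ⟨P, fun _ => 1, fun p _ => zero_le_one, hmem, fun p _ x _ => Finset.mem_univ x,
    ?_, ?_, ?_⟩
  · intro a ha
    obtain ⟨p₀, hp₀, hp₀a⟩ := hsrc a ha
    have : P.filter (fun p => p.1 = a) = {p₀} := by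
      apply Finset.Subset.antisymm
      · intro q hq
        obtain ⟨hqP, hqa⟩ := Finset.mem_filter.mp hq
        rw [Finset.mem_singleton]
        by_contra hne
        exact hdis q hqP p₀ hp₀ hne q.1 q.2.2.start_mem_support
          (by rw [hqa, ← hp₀a]; exact p₀.2.2.start_mem_support)
      · intro q hq
        rw [Finset.mem_singleton] at hq
        subst hq
        exact Finset.mem_filter.mpr ⟨hp₀, hp₀a⟩
    rw [this]; simp
  · intro b hb
    obtain ⟨p₀, hp₀, hp₀b⟩ := hend b hb
    have : P.filter (fun p => p.2.1 = b) = {p₀} := by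
      apply Finset.Subset.antisymm
      · intro q hq
        obtain ⟨hqP, hqb⟩ := Finset.mem_filter.mp hq
        rw [Finset.mem_singleton]
        by_contra hne
        exact hdis q hqP p₀ hp₀ hne q.2.1 q.2.2.end_mem_support
          (by rw [hqb, ← hp₀b]; exact p₀.2.2.end_mem_support)
      · intro q hq
        rw [Finset.mem_singleton] at hq
        subst hq
        exact Finset.mem_filter.mpr ⟨hp₀, hp₀b⟩
    rw [this]; simp
  · intro e
    have hle : (P.filter (fun p => e ∈ p.2.2.edges)).card ≤ 1 := by
      apply Finset.card_le_one.mpr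
      intro p hp q hq
      obtain ⟨hpP, hpe⟩ := Finset.mem_filter.mp hp
      obtain ⟨hqP, hqe⟩ := Finset.mem_filter.mp hq
      by_contra hne
      induction e with
      | _ u v =>
        exact hdis p hpP q hqP hne u (p.2.2.fst_mem_support_of_mem_edges hpe)
          (q.2.2.fst_mem_support_of_mem_edges hqe)
    calc ∑ _p ∈ P.filter (fun p => e ∈ p.2.2.edges), (1 : ℝ)
        = ((P.filter (fun p => e ∈ p.2.2.edges)).card : ℝ) := by simp
      _ ≤ 1 := by exact_mod_cast hle

/-- Adding two flows with disjoint sources and disjoint sinks. -/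
lemma flow_add {C A₁ B₁ A₂ B₂ : Finset V} {η₁ η₂ : ℝ}
    (h₁ : HasUnitFlowIn G C A₁ B₁ η₁) (h₂ : HasUnitFlowIn G C A₂ B₂ η₂)
    (hA : Disjoint A₁ A₂) (hB : Disjoint B₁ B₂) :
    HasUnitFlowIn G C (A₁ ∪ A₂) (B₁ ∪ B₂) (η₁ + η₂) := by
  classical
  obtain ⟨P₁, f₁, hpos₁, hmem₁, hsupp₁, hsrc₁, hsink₁, hedge₁⟩ := h₁
  obtain ⟨P₂, f₂, hpos₂, hmem₂, hsupp₂, hsrc₂, hsink₂, hedge₂⟩ := h₂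
  refine ⟨P₁ ∪ P₂,
    fun p => (if p ∈ P₁ then f₁ p else 0) + (if p ∈ P₂ then f₂ p else 0), ?_, ?_, ?_, ?_, ?_, ?_⟩
  · intro p _
    apply add_nonneg
    · split <;> [exact hpos₁ p ‹_›; exact le_refl 0]
    · split <;> [exact hpos₂ p ‹_›; exact le_refl 0]
  · intro p hp
    rcases Finset.mem_union.mp hp with h | h
    · exact ⟨Finset.mem_union_left _ (hmem₁ p h).1, Finset.mem_union_left _ (hmem₁ p h).2⟩
    · exact ⟨Finset.mem_union_right _ (hmem₂ p h).1, Finset.mem_union_right _ (hmem₂ p h).2⟩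
  · intro p hp x hx
    rcases Finset.mem_union.mp hp with h | h
    · exact hsupp₁ p h x hx
    · exact hsupp₂ p h x hx
  · intro a ha
    rw [Finset.sum_add_distrib,
      sum_ite_filter_union Finset.subset_union_left _ f₁,
      sum_ite_filter_union Finset.subset_union_right _ f₂]
    rcases Finset.mem_union.mp ha with h | h
    · have h2 : P₂.filter (fun p => p.1 = a) = ∅ := by
        apply Finset.filter_eq_empty_iff.mpr
        intro p hp hpa
        exact Finset.disjoint_left.mp hA h (hpa ▸ (hmem₂ p hp).1)
      rw [hsrc₁ a h, h2, Finset.sum_empty, add_zero]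
    · have h1 : P₁.filter (fun p => p.1 = a) = ∅ := by
        apply Finset.filter_eq_empty_iff.mpr
        intro p hp hpa
        exact Finset.disjoint_left.mp hA (hpa ▸ (hmem₁ p hp).1) h
      rw [hsrc₂ a h, h1, Finset.sum_empty, zero_add]
  · intro b hb
    rw [Finset.sum_add_distrib,
      sum_ite_filter_union Finset.subset_union_left _ f₁,
      sum_ite_filter_union Finset.subset_union_right _ f₂]
    rcases Finset.mem_union.mp hb with h | h
    · have h2 : P₂.filter (fun p => p.2.1 = b) = ∅ := by
        apply Finset.filter_eq_empty_iff.mpr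
        intro p hp hpb
        exact Finset.disjoint_left.mp hB h (hpb ▸ (hmem₂ p hp).2)
      rw [hsink₁ b h, h2, Finset.sum_empty, add_zero]
    · have h1 : P₁.filter (fun p => p.2.1 = b) = ∅ := by
        apply Finset.filter_eq_empty_iff.mpr
        intro p hp hpb
        exact Finset.disjoint_left.mp hB (hpb ▸ (hmem₁ p hp).2) h
      rw [hsink₂ b h, h1, Finset.sum_empty, zero_add]
  · intro e
    rw [Finset.sum_add_distrib,
      sum_ite_filter_union Finset.subset_union_left _ f₁,
      sum_ite_filter_union Finset.subset_union_right _ f₂]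
    exact add_le_add (hedge₁ e) (hedge₂ e)

/-- Combining the three families, assuming `|B₁| ≤ |A₁|`. -/
lemma combine_aux (A₁ A₂ B₁ B₂ : Finset V)
    (hA : Disjoint A₁ A₂) (hB : Disjoint B₁ B₂)
    (hcard : A₁.card + A₂.card = B₁.card + B₂.card)
    (hle : B₁.card ≤ A₁.card)
    (h11 : ∀ X ⊆ A₁, ∀ Y ⊆ B₁, X.card = Y.card → HasUnitFlowIn G Finset.univ X Y 1)
    (h22 : ∀ X ⊆ A₂, ∀ Y ⊆ B₂, X.card = Y.card → HasUnitFlowIn G Finset.univ X Y 1)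
    (h12 : ∀ X ⊆ A₁, ∀ Y ⊆ B₂, X.card = Y.card → HasUnitFlowIn G Finset.univ X Y 1) :
    HasUnitFlowIn G Finset.univ (A₁ ∪ A₂) (B₁ ∪ B₂) (1 + 1 + 1) := by
  classical
  obtain ⟨A₁', hA₁'sub, hA₁'card⟩ := Finset.exists_subset_card_eq hle
  have hble : A₂.card ≤ B₂.card := by omega
  obtain ⟨B₂', hB₂'sub, hB₂'card⟩ := Finset.exists_subset_card_eq hble
  -- flow 1 : A₁' → B₁
  have f1 : HasUnitFlowIn G Finset.univ A₁' B₁ 1 :=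
    h11 A₁' hA₁'sub B₁ (Finset.Subset.refl B₁) hA₁'card
  -- flow 2 : A₂ → B₂'
  have f2 : HasUnitFlowIn G Finset.univ A₂ B₂' 1 :=
    h22 A₂ (Finset.Subset.refl A₂) B₂' hB₂'sub hB₂'card.symm
  -- flow 3 : A₁ \ A₁' → B₂ \ B₂'
  have f3 : HasUnitFlowIn G Finset.univ (A₁ \ A₁') (B₂ \ B₂') 1 := by
    apply h12 (A₁ \ A₁') Finset.sdiff_subset (B₂ \ B₂') Finset.sdiff_subset
    rw [Finset.card_sdiff_of_subset hA₁'sub, Finset.card_sdiff_of_subset hB₂'sub]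
    omega
  have f13 : HasUnitFlowIn G Finset.univ (A₁' ∪ (A₁ \ A₁')) (B₁ ∪ (B₂ \ B₂')) (1 + 1) :=
    flow_add f1 f3 Finset.disjoint_sdiff
      (hB.mono_right Finset.sdiff_subset)
  have f132 : HasUnitFlowIn G Finset.univ ((A₁' ∪ (A₁ \ A₁')) ∪ A₂)
      ((B₁ ∪ (B₂ \ B₂')) ∪ B₂') (1 + 1 + 1) := by
    apply flow_add f13 f2
    · exact hA.mono_left (Finset.union_subset hA₁'sub Finset.sdiff_subset)
    · apply Finset.disjoint_union_left.mpr
      exact ⟨(hB.mono_right hB₂'sub), Finset.sdiff_disjoint⟩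
  have hAeq : (A₁' ∪ (A₁ \ A₁')) ∪ A₂ = A₁ ∪ A₂ := by
    rw [Finset.union_sdiff_of_subset hA₁'sub]
  have hBeq : (B₁ ∪ (B₂ \ B₂')) ∪ B₂' = B₁ ∪ B₂ := by
    rw [Finset.union_assoc, Finset.sdiff_union_of_subset hB₂'sub]
  rwa [hAeq, hBeq] at f132

/-- Combining the three families, general case. -/
lemma combine (A₁ A₂ B₁ B₂ : Finset V)
    (hA : Disjoint A₁ A₂) (hB : Disjoint B₁ B₂)
    (hcard : A₁.card + A₂.card = B₁.card + B₂.card)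
    (h11 : ∀ X ⊆ A₁, ∀ Y ⊆ B₁, X.card = Y.card → HasUnitFlowIn G Finset.univ X Y 1)
    (h22 : ∀ X ⊆ A₂, ∀ Y ⊆ B₂, X.card = Y.card → HasUnitFlowIn G Finset.univ X Y 1)
    (h12 : ∀ X ⊆ A₁, ∀ Y ⊆ B₂, X.card = Y.card → HasUnitFlowIn G Finset.univ X Y 1)
    (h21 : ∀ X ⊆ A₂, ∀ Y ⊆ B₁, X.card = Y.card → HasUnitFlowIn G Finset.univ X Y 1) :
    HasUnitFlowIn G Finset.univ (A₁ ∪ A₂) (B₁ ∪ B₂) (1 + 1 + 1) := by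
  rcases le_or_gt B₁.card A₁.card with hle | hlt
  · exact combine_aux A₁ A₂ B₁ B₂ hA hB hcard hle h11 h22 h12
  · have := combine_aux A₂ A₁ B₂ B₁ hA.symm hB.symm (by omega) (by omega) h22 h11 h21
    rwa [Finset.union_comm A₂ A₁, Finset.union_comm B₂ B₁] at this

end Stmt14Aux

/-- If, in a graph of maximum degree at most 3, the disjoint sets
`T₁, T₂` of size `κ` are each node-well-linked and the pair `(T₁,T₂)` is node-linked,
then `T₁ ∪ T₂` is `1/3`-well-linked. -/
theorem stmt14 [Fintype V] (G : SimpleGraph V)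
    (hdeg : ∀ v, deg G v ≤ 3)
    (T₁ T₂ : Finset V) (hdisj : Disjoint T₁ T₂) (κ : ℕ)
    (hc1 : T₁.card = κ) (hc2 : T₂.card = κ)
    (hn1 : NodeWellLinked G T₁) (hn2 : NodeWellLinked G T₂)
    (hnl : NodeLinked G T₁ T₂) :
    WellLinked G (T₁ ∪ T₂) (1 / 3) := by
  intro T' T'' hT' hT'' hdisjT hcardT
  have hη : (1 : ℝ) / (1 / 3) = 1 + 1 + 1 := by norm_num
  rw [hη]
  classical
  set A₁ := T' ∩ T₁ with hA₁def
  set A₂ := T' ∩ T₂ with hA₂def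
  set B₁ := T'' ∩ T₁ with hB₁def
  set B₂ := T'' ∩ T₂ with hB₂def
  have hT'eq : A₁ ∪ A₂ = T' := by
    rw [hA₁def, hA₂def, ← Finset.inter_union_distrib_left, Finset.inter_eq_left.mpr hT']
  have hT''eq : B₁ ∪ B₂ = T'' := by
    rw [hB₁def, hB₂def, ← Finset.inter_union_distrib_left, Finset.inter_eq_left.mpr hT'']
  have hA : Disjoint A₁ A₂ := hdisj.mono Finset.inter_subset_right Finset.inter_subset_right
  have hB : Disjoint B₁ B₂ := hdisj.mono Finset.inter_subset_right Finset.inter_subset_right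
  have hcard : A₁.card + A₂.card = B₁.card + B₂.card := by
    rw [← Finset.card_union_of_disjoint hA, ← Finset.card_union_of_disjoint hB,
      hT'eq, hT''eq, hcardT]
  rw [← hT'eq, ← hT''eq]
  apply Stmt14Aux.combine A₁ A₂ B₁ B₂ hA hB hcard
  · intro X hX Y hY hXY
    refine Stmt14Aux.flow_one (hn1 X Y (hX.trans Finset.inter_subset_right)
      (hY.trans Finset.inter_subset_right) ?_ hXY) hXY
    exact hdisjT.mono (hX.trans Finset.inter_subset_left) (hY.trans Finset.inter_subset_left)
  · intro X hX Y hY hXY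
    refine Stmt14Aux.flow_one (hn2 X Y (hX.trans Finset.inter_subset_right)
      (hY.trans Finset.inter_subset_right) ?_ hXY) hXY
    exact hdisjT.mono (hX.trans Finset.inter_subset_left) (hY.trans Finset.inter_subset_left)
  · intro X hX Y hY hXY
    exact Stmt14Aux.flow_one (hnl X Y (hX.trans Finset.inter_subset_right)
      (hY.trans Finset.inter_subset_right) hXY) hXY
  · intro X hX Y hY hXY
    exact Stmt14Aux.flow_one (Stmt14Aux.nls_reverse (hnl Y X
      (hY.trans Finset.inter_subset_right) (hX.trans Finset.inter_subset_right) hXY.symm)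
      hXY.symm) hXY
end
end
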